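/- arXiv:2103.00715 — 3 statements merged into one kernel-verified Lean document; each statement's English description precedes it below -/
import Mathlib

section
/- Let a < b be reals. On D_{a,b}([0,∞),ℝ) the fast-forwarding maps commute: N_a^l(N_b^r(f)) = N_b^r(N_a^l(f)) for every f ∈ D_{a,b}([0,∞),ℝ). Moreover, both compositions equal the map f ↦ f ∘ (A^f_{(a,b)})^{−1}, where A^f_{(a,b)}(t) = ∫₀^t 1{f(z) ∈ (a,b)} dz and (A^f_{(a,b)})^{−1}(t) = inf{s>0 : A^f_{(a,b)}(s) > t}. -/
open MeasureTheory Set Filter Topology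

noncomputable section

/-- `f` is càdlàg on `[0,∞)`: right-continuous at every `t ≥ 0` and with left limits
at every `t > 0`. -/
def IsCadlag (f : ℝ → ℝ) : Prop :=
  (∀ t : ℝ, 0 ≤ t → Tendsto f (𝓝[≥] t) (𝓝 (f t))) ∧
  (∀ t : ℝ, 0 < t → ∃ L : ℝ, Tendsto f (𝓝[<] t) (𝓝 L))

/-- `A_f(t) = ∫₀^t 1{f(z) > a} dz`. -/
noncomputable def occUpper (a : ℝ) (f : ℝ → ℝ) (t : ℝ) : ℝ :=
  ∫ z in (0:ℝ)..t, ({z : ℝ | a < f z}.indicator (fun _ => (1:ℝ)) z)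

/-- `A_f^{−1}(t) = inf{s > 0 : A_f(s) > t}` (occupation time of `(a,∞)`). -/
noncomputable def occUpperInv (a : ℝ) (f : ℝ → ℝ) (t : ℝ) : ℝ :=
  sInf {s : ℝ | 0 < s ∧ t < occUpper a f s}

/-- The left fast-forwarding map at level `a`: `N_a^l(f) = f ∘ A_f^{−1}`. -/
noncomputable def ffLeft (a : ℝ) (f : ℝ → ℝ) : ℝ → ℝ := fun t => f (occUpperInv a f t)

/-- `A_f(t) = ∫₀^t 1{f(z) < b} dz`. -/
noncomputable def occLower (b : ℝ) (f : ℝ → ℝ) (t : ℝ) : ℝ :=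
  ∫ z in (0:ℝ)..t, ({z : ℝ | f z < b}.indicator (fun _ => (1:ℝ)) z)

/-- `A_f^{−1}(t) = inf{s > 0 : A_f(s) > t}` (occupation time of `(−∞,b)`). -/
noncomputable def occLowerInv (b : ℝ) (f : ℝ → ℝ) (t : ℝ) : ℝ :=
  sInf {s : ℝ | 0 < s ∧ t < occLower b f s}

/-- The right fast-forwarding map at level `b`: `N_b^r(f) = f ∘ A_f^{−1}`. -/
noncomputable def ffRight (b : ℝ) (f : ℝ → ℝ) : ℝ → ℝ := fun t => f (occLowerInv b f t)

/-- Membership in `D_{a,∞}([0,∞),ℝ)`: the Lebesgue time spent in `(a,∞)` is infinite. -/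
def InfAbove (a : ℝ) (f : ℝ → ℝ) : Prop := volume {t : ℝ | 0 ≤ t ∧ a < f t} = ⊤

/-- Membership in `D_{−∞,b}([0,∞),ℝ)`: the Lebesgue time spent in `(−∞,b)` is infinite. -/
def InfBelow (b : ℝ) (f : ℝ → ℝ) : Prop := volume {t : ℝ | 0 ≤ t ∧ f t < b} = ⊤

/-- Membership in `D_{a,b}([0,∞),ℝ)`: the Lebesgue time spent in `(a,b)` is infinite. -/
def InfBetween (a b : ℝ) (f : ℝ → ℝ) : Prop :=
  volume {t : ℝ | 0 ≤ t ∧ f t ∈ Ioo a b} = ⊤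

/-- Condition (Nl): whenever `f ≥ a+ε` on `[t1,t2) ∪ [t3,t4)` and `f ≤ a` on `[t2,t3)`,
the supremum of `f` over `[t2,t3)` is strictly below `a`. -/
def CondNl (a : ℝ) (f : ℝ → ℝ) : Prop :=
  ∀ ε : ℝ, 0 < ε → ∀ t1 t2 t3 t4 : ℝ, t1 < t2 → t2 < t3 → t3 < t4 →
    (∀ t ∈ Ico t1 t2, a + ε ≤ f t) → (∀ t ∈ Ico t3 t4, a + ε ≤ f t) →
    (∀ t ∈ Ico t2 t3, f t ≤ a) →
    ∃ c : ℝ, c < a ∧ ∀ t ∈ Ico t2 t3, f t ≤ c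

/-- Condition (Nr): whenever `f ≤ b−ε` on `[t1,t2) ∪ [t3,t4)` and `f ≥ b` on `[t2,t3)`,
the infimum of `f` over `[t2,t3)` is strictly above `b`. -/
def CondNr (b : ℝ) (f : ℝ → ℝ) : Prop :=
  ∀ ε : ℝ, 0 < ε → ∀ t1 t2 t3 t4 : ℝ, t1 < t2 → t2 < t3 → t3 < t4 →
    (∀ t ∈ Ico t1 t2, f t ≤ b - ε) → (∀ t ∈ Ico t3 t4, f t ≤ b - ε) →
    (∀ t ∈ Ico t2 t3, b ≤ f t) →
    ∃ c : ℝ, b < c ∧ ∀ t ∈ Ico t2 t3, c ≤ f t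

/-- `A^f_{(a,b)}(t) = ∫₀^t 1{f(z) ∈ (a,b)} dz`. -/
noncomputable def occMid (a b : ℝ) (f : ℝ → ℝ) (t : ℝ) : ℝ :=
  ∫ z in (0:ℝ)..t, ({z : ℝ | f z ∈ Ioo a b}.indicator (fun _ => (1:ℝ)) z)

/-- `(A^f_{(a,b)})^{−1}(t) = inf{s > 0 : A^f_{(a,b)}(s) > t}`. -/
noncomputable def occMidInv (a b : ℝ) (f : ℝ → ℝ) (t : ℝ) : ℝ :=
  sInf {s : ℝ | 0 < s ∧ t < occMid a b f s}

/-!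
Write `A_S(t) = λ(S ∩ [0, t))` and `A_S⁻¹` for its right-continuous inverse, so that
`N_a^l f = f ∘ A_E⁻¹` and `N_b^r f = f ∘ A_S⁻¹` with `E = {f > a}` and `S = {f < b}`.
The time change `A_S⁻¹` pushes Lebesgue measure on `[0, ∞)` forward to Lebesgue measure on `S`,
so `f ∘ A_S⁻¹` spends time `A_{E ∩ S}(A_S⁻¹ s)` in `(a, ∞)` up to time `s`. Inverting,
`N_a^l (N_b^r f) = f ∘ A_{E ∩ S}⁻¹`, and this expression is symmetric in `E` and `S`.
-/

theorem measurableSet_of_mem_nhdsGE {α : Type*} [TopologicalSpace α] [LinearOrder α]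
    [OrderTopology α] [SecondCountableTopology α] [MeasurableSpace α] [OpensMeasurableSpace α]
    {U : Set α} (hU : ∀ x ∈ U, U ∈ 𝓝[≥] x) : MeasurableSet U := by
  -- A point of `U` off its interior is isolated on the right in `closure Uᶜ`.
  have hc : (U \ interior U).Countable := by
    refine (countable_setOfPred_isolated_right_within (s := closure Uᶜ)).mono ?_
    rintro x ⟨hxU, hxi⟩
    refine ⟨by rwa [closure_compl], ?_⟩
    obtain ⟨u, hu, hxu, hsub⟩ :=
      mem_nhdsWithin.1 (nhdsWithin_mono x Ioi_subset_Ici_self (hU x hxU))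
    rw [← empty_mem_iff_bot, mem_nhdsWithin]
    refine ⟨u, hu, hxu, fun z ⟨hzu, hzc, hzx⟩ => ?_⟩
    rw [closure_compl] at hzc
    exact hzc (interior_maximal hsub (hu.inter isOpen_Ioi) ⟨hzu, hzx⟩)
  rw [← union_sdiff_cancel (interior_subset (s := U))]
  exact isOpen_interior.measurableSet.union hc.measurableSet

theorem measurableSet_preimage_inter_Ici_of_rightContinuous {f : ℝ → ℝ}
    (hf : ∀ t : ℝ, 0 ≤ t → Tendsto f (𝓝[≥] t) (𝓝 (f t))) {V : Set ℝ} (hV : IsOpen V) :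
    MeasurableSet (f ⁻¹' V ∩ Ici 0) :=
  measurableSet_of_mem_nhdsGE fun x ⟨hxV, hx⟩ =>
    inter_mem (hf x hx (hV.mem_nhds hxV))
      (mem_of_superset self_mem_nhdsWithin (Ici_subset_Ici.2 hx))

-- The paper's `∫₀ᵗ 1_S`, written as an outer measure so that `S` need not be measurable.
def occTime (S : Set ℝ) (t : ℝ) : ℝ := volume.real (S ∩ Ico 0 t)

def occTimeInv (S : Set ℝ) (t : ℝ) : ℝ := sInf {s | 0 < s ∧ t < occTime S s}

section OccupationTime

variable {S T A : Set ℝ} {s t u v : ℝ}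

theorem volume_inter_Ico_ne_top (S : Set ℝ) (u v : ℝ) : volume (S ∩ Ico u v) ≠ ⊤ :=
  measure_ne_top_of_subset inter_subset_right measure_Ico_lt_top.ne

theorem occTime_nonneg : 0 ≤ occTime S t := measureReal_nonneg

theorem occTime_of_nonpos (ht : t ≤ 0) : occTime S t = 0 := by
  simp [occTime, Ico_eq_empty_of_le ht]

theorem occTime_add_measureReal (huv : u ≤ v) :
    occTime S u + volume.real (S ∩ Ici 0 ∩ Ico u v) = occTime S v := by
  have hinter : S ∩ Ico 0 v ∩ Iio u = S ∩ Ico 0 u := by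
    ext z; simp only [mem_inter_iff, mem_Ico, mem_Iio]; grind
  have hdiff : (S ∩ Ico 0 v) \ Iio u = S ∩ Ici 0 ∩ Ico u v := by
    ext z; simp only [mem_inter_iff, mem_Ico, mem_Ici, mem_Iio, Set.mem_sdiff]; grind
  rw [occTime, occTime, ← measureReal_inter_add_sdiff measurableSet_Iio
    (volume_inter_Ico_ne_top S 0 v), hinter, hdiff]

theorem occTime_le_add_sub (huv : u ≤ v) : occTime S v ≤ occTime S u + (v - u) := by
  rw [← occTime_add_measureReal huv, add_le_add_iff_left, ← Real.volume_real_Ico_of_le huv]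
  exact measureReal_mono inter_subset_right measure_Ico_lt_top.ne

theorem monotone_occTime : Monotone (occTime S) := fun _ _ huv => by
  rw [← occTime_add_measureReal huv]
  exact le_add_of_nonneg_right measureReal_nonneg

theorem continuous_occTime : Continuous (occTime S) := by
  refine (LipschitzWith.of_le_add fun x y => ?_).continuous
  rcases le_total x y with hxy | hyx
  · exact (monotone_occTime hxy).trans (le_add_of_nonneg_right dist_nonneg)
  · linarith [occTime_le_add_sub (S := S) hyx, Real.dist_eq x y, le_abs_self (x - y)]

theorem occTime_congr_of_subset (hT : T ⊆ S) (huv : u ≤ v) (h : occTime S u = occTime S v) :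
    occTime T u = occTime T v := by
  have hle : volume.real (T ∩ Ici 0 ∩ Ico u v) ≤ volume.real (S ∩ Ici 0 ∩ Ico u v) :=
    measureReal_mono (by gcongr) (volume_inter_Ico_ne_top _ u v)
  linarith [occTime_add_measureReal (S := S) huv, occTime_add_measureReal (S := T) huv,
    measureReal_nonneg (μ := volume) (s := T ∩ Ici 0 ∩ Ico u v)]

theorem tendsto_occTime_atTop (hS : volume (S ∩ Ici 0) = ⊤) :
    Tendsto (occTime S) atTop atTop := by
  have hmono : Monotone fun t => S ∩ Ico 0 t := fun _ _ h =>
    inter_subset_inter_right _ (Ico_subset_Ico_right h)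
  have hU : ⋃ t, S ∩ Ico 0 t = S ∩ Ici 0 := by
    ext z
    simp only [mem_iUnion, mem_inter_iff, mem_Ico, mem_Ici]
    exact ⟨fun ⟨_, hz, hz0, _⟩ => ⟨hz, hz0⟩, fun ⟨hz, hz0⟩ => ⟨z + 1, hz, hz0, by linarith⟩⟩
  have hlim := tendsto_measure_iUnion_atTop (μ := volume) hmono
  rw [hU, hS] at hlim
  refine tendsto_atTop_atTop_of_monotone monotone_occTime fun c => ?_
  obtain ⟨t, ht⟩ := (hlim.eventually (lt_mem_nhds (ENNReal.ofReal_lt_top (r := c)))).exists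
  exact ⟨t, (ENNReal.ofReal_le_iff_le_toReal (volume_inter_Ico_ne_top S 0 t)).1 ht.le⟩

theorem setOf_lt_occTime_nonempty (hS : volume (S ∩ Ici 0) = ⊤) (t : ℝ) :
    {s | 0 < s ∧ t < occTime S s}.Nonempty :=
  ((eventually_gt_atTop 0).and ((tendsto_occTime_atTop hS).eventually_gt_atTop t)).exists

theorem occTimeInv_nonneg : 0 ≤ occTimeInv S t := Real.sInf_nonneg fun _ hs => hs.1.le

theorem occTimeInv_le (hs : 0 < s) (h : t < occTime S s) : occTimeInv S t ≤ s :=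
  csInf_le ⟨0, fun _ hr => hr.1.le⟩ ⟨hs, h⟩

theorem occTimeInv_lt_iff (hS : volume (S ∩ Ici 0) = ⊤) (ht : 0 ≤ t) :
    occTimeInv S t < s ↔ t < occTime S s := by
  constructor
  · intro h
    obtain ⟨r, ⟨-, hr⟩, hrs⟩ := exists_lt_of_csInf_lt (setOf_lt_occTime_nonempty hS t) h
    exact hr.trans_le (monotone_occTime hrs.le)
  · intro h
    have hs : 0 < s := by
      by_contra! hs
      rw [occTime_of_nonpos hs] at h
      linarith
    obtain ⟨r, hr, hrs⟩ : ∃ r, t < occTime S r ∧ r ∈ Ioo 0 s :=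
      ((continuous_occTime.continuousWithinAt.eventually (lt_mem_nhds h)).and
        (Ioo_mem_nhdsLT hs)).exists
    exact (occTimeInv_le hrs.1 hr).trans_lt hrs.2

theorem occTime_occTimeInv (hS : volume (S ∩ Ici 0) = ⊤) (ht : 0 ≤ t) :
    occTime S (occTimeInv S t) = t := by
  refine le_antisymm (not_lt.1 fun h => lt_irrefl _ ((occTimeInv_lt_iff hS ht).2 h)) ?_
  exact ge_of_tendsto (continuous_occTime.continuousWithinAt (s := Ioi (occTimeInv S t)))
    (eventually_nhdsWithin_of_forall fun s hs => ((occTimeInv_lt_iff hS ht).1 hs).le)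

theorem monotone_occTimeInv (hS : volume (S ∩ Ici 0) = ⊤) : Monotone (occTimeInv S) :=
  fun _ t' h => csInf_le_csInf ⟨0, fun _ hs => hs.1.le⟩ (setOf_lt_occTime_nonempty hS t')
    fun _ hs => ⟨hs.1, h.trans_lt hs.2⟩

theorem preimage_occTimeInv_Ico_inter_Ici (hS : volume (S ∩ Ici 0) = ⊤) :
    occTimeInv S ⁻¹' Ico u v ∩ Ici 0 = Ico (occTime S u) (occTime S v) := by
  ext z
  by_cases hz : 0 ≤ z
  · simp only [mem_inter_iff, mem_preimage, mem_Ico, mem_Ici, hz, and_true, ← not_lt,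
      occTimeInv_lt_iff hS hz]
  · have := occTime_nonneg (S := S) (t := u)
    simp only [mem_inter_iff, mem_Ici, hz, and_false, false_iff, mem_Ico, not_and]
    intro h
    linarith

theorem map_occTimeInv (hS : volume (S ∩ Ici 0) = ⊤) :
    (volume.restrict (Ici 0)).map (occTimeInv S) = volume.restrict (S ∩ Ici 0) := by
  have hm := (monotone_occTimeInv hS).measurable
  have hIco : ∀ u v : ℝ, (volume.restrict (Ici 0)).map (occTimeInv S) (Ico u v)
      = volume (Ico (occTime S u) (occTime S v)) := fun u v => by
    rw [Measure.map_apply hm measurableSet_Ico, Measure.restrict_apply (hm measurableSet_Ico),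
      preimage_occTimeInv_Ico_inter_Ici hS]
  refine Measure.ext_of_Ico' _ _ (fun u v _ => by rw [hIco]; exact measure_Ico_lt_top.ne)
    fun u v huv => ?_
  rw [hIco, Real.volume_Ico, Measure.restrict_apply measurableSet_Ico, inter_comm,
    ← occTime_add_measureReal (S := S) huv.le, add_sub_cancel_left,
    ofReal_measureReal (volume_inter_Ico_ne_top _ u v)]

theorem preimage_occTimeInv_inter_Ici : occTimeInv S ⁻¹' (A ∩ Ici 0) = occTimeInv S ⁻¹' A := by
  ext z
  exact and_iff_left (occTimeInv_nonneg (S := S) (t := z))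

theorem measurableSet_preimage_occTimeInv (hS : volume (S ∩ Ici 0) = ⊤)
    (hA : MeasurableSet (A ∩ Ici 0)) : MeasurableSet (occTimeInv S ⁻¹' A ∩ Ici 0) := by
  rw [← preimage_occTimeInv_inter_Ici]
  exact ((monotone_occTimeInv hS).measurable hA).inter measurableSet_Ici

theorem volume_preimage_occTimeInv (hS : volume (S ∩ Ici 0) = ⊤)
    (hA : MeasurableSet (A ∩ Ici 0)) :
    volume (occTimeInv S ⁻¹' A ∩ Ici 0) = volume (A ∩ S ∩ Ici 0) := by
  rw [← preimage_occTimeInv_inter_Ici, ← Measure.restrict_apply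
    ((monotone_occTimeInv hS).measurable hA), ← Measure.map_apply
    (monotone_occTimeInv hS).measurable hA, map_occTimeInv hS, Measure.restrict_apply hA]
  congr 1
  ext z
  simp only [mem_inter_iff]
  tauto

theorem occTime_preimage_occTimeInv (hS : volume (S ∩ Ici 0) = ⊤)
    (hA : MeasurableSet (A ∩ Ici 0)) (hs : 0 ≤ s) :
    occTime (occTimeInv S ⁻¹' A) s = occTime (A ∩ S) (occTimeInv S s) := by
  have hpre : occTimeInv S ⁻¹' A ∩ Ico 0 s
      = occTimeInv S ⁻¹' (A ∩ Iio (occTimeInv S s)) ∩ Ici 0 := by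
    ext z
    by_cases hz : 0 ≤ z
    · simp only [mem_inter_iff, mem_preimage, mem_Ico, mem_Iio, mem_Ici, hz, true_and, and_true,
        occTimeInv_lt_iff hS hz, occTime_occTimeInv hS hs]
    · simp [hz]
  have hmeas : MeasurableSet (A ∩ Iio (occTimeInv S s) ∩ Ici 0) := by
    rw [inter_right_comm]
    exact hA.inter measurableSet_Iio
  rw [occTime, occTime, hpre, measureReal_def, volume_preimage_occTimeInv hS hmeas,
    ← measureReal_def]
  congr 1
  ext z
  simp only [mem_inter_iff, mem_Iio, mem_Ici, mem_Ico]
  tauto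

theorem occTime_occTimeInv_occTime (hS : volume (S ∩ Ici 0) = ⊤) (hT : T ⊆ S) (x : ℝ) :
    occTime T (occTimeInv S (occTime S x)) = occTime T x := by
  -- `occTime S` is constant on `[x, occTimeInv S (occTime S x)]`, hence so is `occTime T`.
  have hx : x ≤ occTimeInv S (occTime S x) :=
    not_lt.1 fun h => lt_irrefl _ ((occTimeInv_lt_iff hS occTime_nonneg).1 h)
  exact (occTime_congr_of_subset hT hx (occTime_occTimeInv hS occTime_nonneg).symm).symm

theorem occTimeInv_occTimeInv_preimage (hA : MeasurableSet (A ∩ Ici 0))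
    (hAS : volume (A ∩ S ∩ Ici 0) = ⊤) (ht : 0 ≤ t) :
    occTimeInv S (occTimeInv (occTimeInv S ⁻¹' A) t) = occTimeInv (A ∩ S) t := by
  have hS : volume (S ∩ Ici 0) = ⊤ :=
    measure_mono_top (inter_subset_inter_left _ inter_subset_right) hAS
  have hG : volume (occTimeInv S ⁻¹' A ∩ Ici 0) = ⊤ :=
    (volume_preimage_occTimeInv hS hA).trans hAS
  refine eq_of_forall_gt_iff fun x => ?_
  rw [occTimeInv_lt_iff hS occTimeInv_nonneg, occTimeInv_lt_iff hG ht,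
    occTime_preimage_occTimeInv hS hA occTime_nonneg,
    occTime_occTimeInv_occTime hS inter_subset_right, occTimeInv_lt_iff hAS ht]

end OccupationTime

section FastForward

variable {S : Set ℝ} {f : ℝ → ℝ} {a b : ℝ}

theorem intervalIntegral_indicator_eq_occTime (hS : MeasurableSet (S ∩ Ici 0)) {t : ℝ}
    (ht : 0 ≤ t) : ∫ z in (0:ℝ)..t, S.indicator (fun _ => (1:ℝ)) z = occTime S t := by
  have hmeas : MeasurableSet (Ico 0 t ∩ S) := by
    rw [inter_comm, ← Ici_inter_Iio, ← inter_assoc]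
    exact hS.inter measurableSet_Iio
  rw [intervalIntegral.integral_of_le ht, ← integral_Ico_eq_integral_Ioc,
    ← integral_indicator measurableSet_Ico, indicator_indicator,
    show (fun _ => (1:ℝ)) = (1 : ℝ → ℝ) from rfl, integral_indicator_one hmeas, occTime,
    inter_comm]

theorem occTimeInv_eq_sInf_intervalIntegral (hS : MeasurableSet (S ∩ Ici 0)) (t : ℝ) :
    occTimeInv S t
      = sInf {s | 0 < s ∧ t < ∫ z in (0:ℝ)..s, S.indicator (fun _ => (1:ℝ)) z} := by
  unfold occTimeInv
  congr 1
  ext s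
  exact and_congr_right fun hs => by rw [intervalIntegral_indicator_eq_occTime hS hs.le]

theorem ffLeft_eq_comp_occTimeInv (h : MeasurableSet ({z | a < f z} ∩ Ici 0)) :
    ffLeft a f = f ∘ occTimeInv {z | a < f z} :=
  funext fun t => congrArg f (occTimeInv_eq_sInf_intervalIntegral h t).symm

theorem ffRight_eq_comp_occTimeInv (h : MeasurableSet ({z | f z < b} ∩ Ici 0)) :
    ffRight b f = f ∘ occTimeInv {z | f z < b} :=
  funext fun t => congrArg f (occTimeInv_eq_sInf_intervalIntegral h t).symm

theorem occMidInv_eq_occTimeInv (h : MeasurableSet ({z | f z ∈ Ioo a b} ∩ Ici 0)) :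
    occMidInv a b f = occTimeInv {z | f z ∈ Ioo a b} :=
  funext fun t => (occTimeInv_eq_sInf_intervalIntegral h t).symm

end FastForward

theorem ffLeft_ffRight_comm_general (a b : ℝ) (f : ℝ → ℝ) (hf : IsCadlag f)
    (hfD : InfBetween a b f) :
    ∀ t : ℝ, 0 ≤ t →
      ffLeft a (ffRight b f) t = ffRight b (ffLeft a f) t ∧
      ffLeft a (ffRight b f) t = f (occMidInv a b f t) := by
  intro t ht
  set E := {z | a < f z}
  set S := {z | f z < b}
  have hE : MeasurableSet (E ∩ Ici 0) :=
    measurableSet_preimage_inter_Ici_of_rightContinuous hf.1 isOpen_Ioi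
  have hS : MeasurableSet (S ∩ Ici 0) :=
    measurableSet_preimage_inter_Ici_of_rightContinuous hf.1 isOpen_Iio
  have hES : volume (E ∩ S ∩ Ici 0) = ⊤ := by
    rw [← hfD]
    congr 1
    ext z
    exact and_comm
  have hSE : volume (S ∩ E ∩ Ici 0) = ⊤ := by rwa [inter_comm S]
  have hEpre : MeasurableSet (occTimeInv S ⁻¹' E ∩ Ici 0) := measurableSet_preimage_occTimeInv
    (measure_mono_top (inter_subset_inter_left _ inter_subset_left) hSE) hE
  have hSpre : MeasurableSet (occTimeInv E ⁻¹' S ∩ Ici 0) := measurableSet_preimage_occTimeInv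
    (measure_mono_top (inter_subset_inter_left _ inter_subset_left) hES) hS
  have hL : ffLeft a (ffRight b f) t = f (occTimeInv (E ∩ S) t) := by
    rw [ffRight_eq_comp_occTimeInv hS, ffLeft_eq_comp_occTimeInv (f := f ∘ occTimeInv S) hEpre]
    exact congrArg f (occTimeInv_occTimeInv_preimage hE hES ht :)
  have hR : ffRight b (ffLeft a f) t = f (occTimeInv (E ∩ S) t) := by
    rw [ffLeft_eq_comp_occTimeInv hE, ffRight_eq_comp_occTimeInv (f := f ∘ occTimeInv E) hSpre,
      inter_comm E]
    exact congrArg f (occTimeInv_occTimeInv_preimage hS hSE ht :)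
  rw [occMidInv_eq_occTimeInv
    (measurableSet_preimage_inter_Ici_of_rightContinuous hf.1 isOpen_Ioo)]
  exact ⟨hL.trans hR.symm, hL⟩

/-- Proposition 3.16 / `prop:FF_repr_ab`. On `D_{a,b}([0,∞),ℝ)` the
fast-forwarding maps commute, `N_a^l(N_b^r(f)) = N_b^r(N_a^l(f))`, and both compositions
equal `f ∘ (A^f_{(a,b)})^{−1}`. -/
theorem ffLeft_ffRight_comm (a b : ℝ) (hab : a < b) (f : ℝ → ℝ) (hf : IsCadlag f)
    (hfD : InfBetween a b f) :
    ∀ t : ℝ, 0 ≤ t →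
      ffLeft a (ffRight b f) t = ffRight b (ffLeft a f) t ∧
      ffLeft a (ffRight b f) t = f (occMidInv a b f t) :=
  ffLeft_ffRight_comm_general a b f hf hfD
end
end

section
/- Let f ∈ D([0,∞),ℝ) satisfy f(0) < 1, and set τ = inf{t>0 : f(t) ≥ 1} (with inf ∅ = ∞). Assume that for each δ>0 one has sup_{0 ≤ t < τ−δ} f(t) < 1, and that if τ < ∞ then f(τ) > 1. Then f is a point of continuity of the right killing map D^r : D([0,∞),ℝ) → D([0,∞),ℝ) defined by D^r(f)(t) = f(t) for t < τ and D^r(f)(t) = 1 for t ≥ τ, with respect to the Skorokhod J1 topology. -/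
open MeasureTheory Set Filter Topology

noncomputable section

/-- A Skorokhod time change on `[0,T]`: a strictly increasing continuous bijection of
`[0,T]` onto itself. -/
def IsTimeChange (T : ℝ) (γ : ℝ → ℝ) : Prop :=
  ContinuousOn γ (Icc 0 T) ∧ StrictMonoOn γ (Icc 0 T) ∧ γ 0 = 0 ∧ γ T = T

/-- The Skorokhod `J1` metric on `D([0,T],ℝ)`:
`d_{J1,T}(f,g) = inf_γ max( sup_{t∈[0,T]} |γ(t)−t| , sup_{t∈[0,T]} |f(γ(t))−g(t)| )`. -/
noncomputable def dJ1T (T : ℝ) (f g : ℝ → ℝ) : ℝ :=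
  sInf {r : ℝ | 0 ≤ r ∧ ∃ γ : ℝ → ℝ, IsTimeChange T γ ∧
    (∀ t ∈ Icc (0:ℝ) T, |γ t - t| ≤ r) ∧ (∀ t ∈ Icc (0:ℝ) T, |f (γ t) - g t| ≤ r)}

/-- The smoothed restriction `f|_m` of `f` to `[0,m]`. -/
noncomputable def restrictD (m : ℝ) (f : ℝ → ℝ) : ℝ → ℝ :=
  fun t => if t ≤ m - 1 then f t else (m - t) * f t

/-- The Skorokhod `J1` metric on `D([0,∞),ℝ)`:
`d_{J1}(f,g) = Σ_{m=1}^∞ 2^{−m} (1 ∧ d_{J1,m}(f|_m, g|_m))`. -/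
noncomputable def dJ1 (f g : ℝ → ℝ) : ℝ :=
  ∑' m : ℕ, (2:ℝ)⁻¹ ^ (m + 1) *
    min 1 (dJ1T ((m:ℝ) + 1) (restrictD ((m:ℝ) + 1) f) (restrictD ((m:ℝ) + 1) g))

/-- `τ = inf{t > 0 : f(t) ≥ c}` as an extended real (`inf ∅ = ∞`). -/
noncomputable def tauGe (c : ℝ) (f : ℝ → ℝ) : EReal :=
  sInf {x : EReal | ∃ t : ℝ, 0 < t ∧ c ≤ f t ∧ x = (t : EReal)}

/-- The right killing map `D^r`: the path is followed until
`τ = inf{t>0 : f(t) ≥ 1}` and absorbed at `1` afterwards. -/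
noncomputable def killRightD (f : ℝ → ℝ) : ℝ → ℝ :=
  fun t => if (t : EReal) < tauGe 1 f then f t else 1

/-!
Only the first `N` summands of `dJ1` matter, and the `m`-th one is controlled once `f` and `g`
are `J1`-close on a slightly longer window through a time change `γ`. If `f` stays below
level `1` on that window, it does so uniformly, so `g` stays below `1` as well and neither path
is killed there. Otherwise `f` jumps strictly above `1` at its killing time `τ`; then `g` is
killed at a time `r` with `γ r` close to `τ`, since `f (γ r)` is close to `g r ≥ 1` and `f`
stays uniformly below `1` away from `τ`. On `[γ r, τ)` the path `f` is close to its left limit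
at `τ`, hence to `f (γ r)`, hence to `1`, which is the value of the killed `g` there.
-/

theorem IsCadlag.isBoundedUnder_abs {f : ℝ → ℝ} (hf : IsCadlag f) {x : ℝ} (hx : 0 ≤ x) :
    (𝓝[Ici 0] x).IsBoundedUnder (· ≤ ·) fun t => |f t| := by
  have hright := ((hf.1 x hx).abs).isBoundedUnder_le
  rcases hx.eq_or_lt with rfl | hx
  · exact hright
  · obtain ⟨L, hL⟩ := hf.2 x hx
    refine IsBoundedUnder.mono nhdsWithin_le_nhds ?_
    rw [← nhdsLT_sup_nhdsGE, IsBoundedUnder, map_sup]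
    exact isBounded_sup hL.abs.isBoundedUnder_le hright

theorem IsCadlag.exists_abs_le {f : ℝ → ℝ} (hf : IsCadlag f) (M : ℝ) :
    ∃ B, ∀ t ∈ Icc 0 M, |f t| ≤ B := by
  suffices h : BddAbove ((fun t => |f t|) '' Icc 0 M) by
    obtain ⟨B, hB⟩ := h
    exact ⟨B, fun t ht => hB (mem_image_of_mem _ ht)⟩
  refine isCompact_Icc.induction_on (by simp) (fun s t hst ht => ht.mono (image_mono hst))
    (fun s t hs ht => by rw [image_union]; exact hs.union ht) fun x hx => ?_
  obtain ⟨B, hB⟩ := hf.isBoundedUnder_abs hx.1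
  refine ⟨{t | |f t| ≤ B}, nhdsWithin_mono _ (fun t ht => ht.1) hB, B, ?_⟩
  rintro _ ⟨t, ht, rfl⟩
  exact ht

theorem IsCadlag.exists_Ioo_abs_sub_le {f : ℝ → ℝ} (hf : IsCadlag f) {s : ℝ} (hs : 0 < s)
    {η : ℝ} (hη : 0 < η) : ∃ l ∈ Ico 0 s, ∀ u ∈ Ioo l s, ∀ v ∈ Ioo l s, |f u - f v| ≤ η := by
  obtain ⟨L, hL⟩ := hf.2 s hs
  obtain ⟨l, hl, hsub⟩ := mem_nhdsLT_iff_exists_Ioo_subset.1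
    (hL (Metric.closedBall_mem_nhds L (half_pos hη)))
  refine ⟨max l 0, ⟨le_max_right _ _, max_lt hl hs⟩, fun u hu v hv => ?_⟩
  have hu' := hsub ⟨(le_max_left _ _).trans_lt hu.1, hu.2⟩
  have hv' := hsub ⟨(le_max_left _ _).trans_lt hv.1, hv.2⟩
  simp only [mem_preimage, Metric.mem_closedBall, Real.dist_eq] at hu' hv'
  exact (abs_sub_le _ L _).trans (by rw [abs_sub_comm L]; linarith)

theorem restrictD_eq_min_mul (T : ℝ) (h : ℝ → ℝ) (u : ℝ) :
    restrictD T h u = min 1 (T - u) * h u := by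
  unfold restrictD
  split_ifs with hu
  · rw [min_eq_left (by linarith), one_mul]
  · rw [min_eq_right (by linarith)]

theorem restrictD_of_le {T u : ℝ} (h : ℝ → ℝ) (hu : u ≤ T - 1) : restrictD T h u = h u :=
  if_pos hu

theorem abs_restrictD {T u : ℝ} (h : ℝ → ℝ) (hu : u ≤ T) :
    |restrictD T h u| = min 1 (T - u) * |h u| := by
  rw [restrictD_eq_min_mul, abs_mul, abs_of_nonneg (le_min zero_le_one (by linarith))]

theorem abs_restrictD_le {T u : ℝ} (h : ℝ → ℝ) (hu : u ≤ T) : |restrictD T h u| ≤ |h u| := by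
  rw [abs_restrictD h hu]
  exact mul_le_of_le_one_left (abs_nonneg _) (min_le_left _ _)

theorem isTimeChange_id (T : ℝ) : IsTimeChange T id :=
  ⟨continuousOn_id, strictMono_id.strictMonoOn _, rfl, rfl⟩

theorem IsTimeChange.mem_Icc {T : ℝ} {γ : ℝ → ℝ} (hγ : IsTimeChange T γ) {t : ℝ}
    (ht : t ∈ Icc 0 T) : γ t ∈ Icc 0 T := by
  have hT : (0 : ℝ) ≤ T := ht.1.trans ht.2
  constructor
  · simpa [hγ.2.2.1] using hγ.2.1.monotoneOn (left_mem_Icc.2 hT) ht ht.1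
  · simpa [hγ.2.2.2] using hγ.2.1.monotoneOn ht (right_mem_Icc.2 hT) ht.2

theorem dJ1T_nonneg (T : ℝ) (f g : ℝ → ℝ) : 0 ≤ dJ1T T f g :=
  Real.sInf_nonneg fun _ hr => hr.1

theorem dJ1T_le {T r : ℝ} {f g γ : ℝ → ℝ} (hγ : IsTimeChange T γ) (hr : 0 ≤ r)
    (htime : ∀ t ∈ Icc 0 T, |γ t - t| ≤ r) (hval : ∀ t ∈ Icc 0 T, |f (γ t) - g t| ≤ r) :
    dJ1T T f g ≤ r :=
  csInf_le ⟨0, fun _ hr => hr.1⟩ ⟨hr, γ, hγ, htime, hval⟩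

theorem exists_timeChange_of_dJ1T_lt {T a : ℝ} {f g : ℝ → ℝ}
    (hbdd : ∃ C, ∀ t ∈ Icc 0 T, |f t - g t| ≤ C) (h : dJ1T T f g < a) :
    ∃ γ, IsTimeChange T γ ∧ (∀ t ∈ Icc 0 T, |γ t - t| ≤ a) ∧
      ∀ t ∈ Icc 0 T, |f (γ t) - g t| ≤ a := by
  obtain ⟨C, hC⟩ := hbdd
  have hne : Set.Nonempty {r : ℝ | 0 ≤ r ∧ ∃ γ : ℝ → ℝ, IsTimeChange T γ ∧
      (∀ t ∈ Icc (0:ℝ) T, |γ t - t| ≤ r) ∧ (∀ t ∈ Icc (0:ℝ) T, |f (γ t) - g t| ≤ r)} :=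
    ⟨max C 0, le_max_right _ _, id, isTimeChange_id T, fun t _ => by simp,
      fun t ht => (hC t ht).trans (le_max_left _ _)⟩
  obtain ⟨r, ⟨-, γ, hγ, htime, hval⟩, hra⟩ := exists_lt_of_csInf_lt hne h
  exact ⟨γ, hγ, fun t ht => (htime t ht).trans hra.le, fun t ht => (hval t ht).trans hra.le⟩

theorem IsCadlag.exists_abs_restrictD_sub_le {f g : ℝ → ℝ} (hf : IsCadlag f) (hg : IsCadlag g)
    (T : ℝ) : ∃ C, ∀ t ∈ Icc 0 T, |restrictD T f t - restrictD T g t| ≤ C := by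
  obtain ⟨Bf, hBf⟩ := hf.exists_abs_le T
  obtain ⟨Bg, hBg⟩ := hg.exists_abs_le T
  refine ⟨Bf + Bg, fun t ht => (abs_sub _ _).trans (add_le_add ?_ ?_)⟩
  · exact (abs_restrictD_le f ht.2).trans (hBf t ht)
  · exact (abs_restrictD_le g ht.2).trans (hBg t ht)

def glueLinear (γ : ℝ → ℝ) (p T t : ℝ) : ℝ :=
  if t ≤ p then γ t else γ p + (t - p) * ((T - γ p) / (T - p))

section glueLinear

variable {γ : ℝ → ℝ} {p T : ℝ}

theorem glueLinear_of_le {t : ℝ} (ht : t ≤ p) : glueLinear γ p T t = γ t := if_pos ht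

theorem glueLinear_of_lt {t : ℝ} (ht : p < t) :
    glueLinear γ p T t = γ p + (t - p) * ((T - γ p) / (T - p)) := if_neg (not_le.2 ht)

theorem isTimeChange_glueLinear {M : ℝ} (hγ : IsTimeChange M γ) (hpM : p ≤ M) (hp : 0 ≤ p)
    (hpT : p < T) (hγp : γ p < T) : IsTimeChange T (glueLinear γ p T) := by
  refine ⟨?_, ?_, by rw [glueLinear_of_le hp, hγ.2.2.1], ?_⟩
  · rw [← Icc_union_Icc_eq_Icc hp hpT.le]
    refine ContinuousOn.union_of_isClosed ?_ ?_ isClosed_Icc isClosed_Icc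
    · exact (hγ.1.mono (Icc_subset_Icc_right hpM)).congr fun t ht => glueLinear_of_le ht.2
    · refine (by fun_prop : Continuous fun t => γ p + (t - p) * ((T - γ p) / (T - p)))
        |>.continuousOn.congr fun t ht => ?_
      rcases ht.1.eq_or_lt with rfl | hlt
      · simp [glueLinear_of_le le_rfl]
      · exact glueLinear_of_lt hlt
  · intro x hx y hy hxy
    have hmono := hγ.2.1.mono (Icc_subset_Icc_right hpM)
    have hslope : 0 < (T - γ p) / (T - p) := div_pos (by linarith) (by linarith)
    rcases le_or_gt y p with hyp | hyp
    · rw [glueLinear_of_le (hxy.le.trans hyp), glueLinear_of_le hyp]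
      exact hmono ⟨hx.1, hxy.le.trans hyp⟩ ⟨hy.1, hyp⟩ hxy
    rw [glueLinear_of_lt hyp]
    rcases le_or_gt x p with hxp | hxp
    · rw [glueLinear_of_le hxp]
      have := hmono.monotoneOn ⟨hx.1, hxp⟩ ⟨hp, le_rfl⟩ hxp
      nlinarith
    · rw [glueLinear_of_lt hxp]
      nlinarith
  · rw [glueLinear_of_lt hpT, mul_div_cancel₀ _ (sub_pos.2 hpT).ne']
    ring

theorem glueLinear_mem_Icc {t : ℝ} (hγp : γ p < T) (hpt : p < t) (htT : t ≤ T) :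
    glueLinear γ p T t ∈ Icc (γ p) T := by
  rw [glueLinear_of_lt hpt]
  have hfrac : (t - p) / (T - p) ≤ 1 := (div_le_one (by linarith)).2 (by linarith)
  constructor
  · have : 0 ≤ (t - p) * ((T - γ p) / (T - p)) :=
      mul_nonneg (by linarith) (div_nonneg (by linarith) (by linarith))
    linarith
  · calc γ p + (t - p) * ((T - γ p) / (T - p)) = γ p + (t - p) / (T - p) * (T - γ p) := by ring
      _ ≤ γ p + 1 * (T - γ p) := by gcongr
      _ = T := by ring

end glueLinear

/-- The time change is cut at `T - 2d` and completed linearly; the error this causes is damped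
by the weight `min 1 (T - ·)` of `restrictD T`, which is at most `3d` beyond the cut. -/
theorem dJ1T_restrictD_le {M T d e B : ℝ} {F G γ : ℝ → ℝ} (hγ : IsTimeChange M γ) (hTM : T ≤ M)
    (hd : 0 < d) (hdT : 2 * d ≤ T) (htime : ∀ t ∈ Icc 0 T, |γ t - t| ≤ d)
    (hval : ∀ t ∈ Icc 0 T, |F (γ t) - G t| ≤ e)
    (hF : ∀ u ∈ Icc 0 T, |F u| ≤ B) (hG : ∀ t ∈ Icc 0 T, |G t| ≤ B) :
    dJ1T T (restrictD T F) (restrictD T G) ≤ e + 3 * d * (2 * B + 1) := by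
  have h0T : (0 : ℝ) ∈ Icc 0 T := ⟨le_rfl, by linarith⟩
  have he : 0 ≤ e := (abs_nonneg _).trans (hval 0 h0T)
  have hB : 0 ≤ B := (abs_nonneg _).trans (hG 0 h0T)
  set p := T - 2 * d
  have hpT : p ∈ Icc 0 T := ⟨by linarith, by linarith⟩
  have hγp := abs_le.1 (htime p hpT)
  have hγpT : γ p < T := by linarith
  have hγ' := isTimeChange_glueLinear hγ (hpT.2.trans hTM) hpT.1 (by linarith) hγpT
  refine dJ1T_le hγ' (by positivity) (fun t ht => ?_) fun t ht => ?_
  · rcases le_or_gt t p with htp | htp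
    · rw [glueLinear_of_le htp]
      exact (htime t ht).trans (by nlinarith)
    · have := glueLinear_mem_Icc hγpT htp ht.2
      rw [abs_le]
      constructor <;> nlinarith [this.1, this.2, ht.2]
  have hγ't := hγ'.mem_Icc ht
  rcases le_or_gt t p with htp | htp
  · rw [glueLinear_of_le htp] at hγ't ⊢
    have hw : |min 1 (T - γ t) - min 1 (T - t)| ≤ d := by
      refine (abs_min_sub_min_le_max _ _ _ _).trans ?_
      rw [sub_self, abs_zero, sub_sub_sub_cancel_left, abs_sub_comm]
      exact max_le hd.le (htime t ht)
    have hw1 : |min 1 (T - γ t)| ≤ 1 := by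
      rw [abs_of_nonneg (le_min zero_le_one (by linarith [hγ't.2]))]
      exact min_le_left _ _
    rw [restrictD_eq_min_mul, restrictD_eq_min_mul]
    calc |min 1 (T - γ t) * F (γ t) - min 1 (T - t) * G t|
        = |min 1 (T - γ t) * (F (γ t) - G t) + (min 1 (T - γ t) - min 1 (T - t)) * G t| := by
          ring_nf
      _ ≤ 1 * e + d * B := by
          refine (abs_add_le _ _).trans ?_
          rw [abs_mul, abs_mul]
          gcongr
          exacts [hval t ht, hG t ht]
      _ ≤ e + 3 * d * (2 * B + 1) := by nlinarith
  · have hγ'p := (glueLinear_mem_Icc hγpT htp ht.2).1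
    calc |restrictD T F (glueLinear γ p T t) - restrictD T G t|
        ≤ |restrictD T F (glueLinear γ p T t)| + |restrictD T G t| := abs_sub _ _
      _ = min 1 (T - glueLinear γ p T t) * |F (glueLinear γ p T t)| + min 1 (T - t) * |G t| := by
          rw [abs_restrictD F hγ't.2, abs_restrictD G ht.2]
      _ ≤ (3 * d) * B + (2 * d) * B := by
          gcongr
          · exact (min_le_right _ _).trans (by linarith)
          · exact hF _ hγ't
          · exact (min_le_right _ _).trans (by linarith)
          · exact hG t ht
      _ ≤ e + 3 * d * (2 * B + 1) := by nlinarith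

theorem dJ1_summable (f g : ℝ → ℝ) :
    Summable fun m : ℕ => (2 : ℝ)⁻¹ ^ (m + 1) *
      min 1 (dJ1T ((m : ℝ) + 1) (restrictD ((m : ℝ) + 1) f) (restrictD ((m : ℝ) + 1) g)) := by
  refine Summable.of_nonneg_of_le (fun m => ?_) (fun m => ?_)
    ((summable_geometric_two).mul_left 2⁻¹)
  · exact mul_nonneg (by positivity) (le_min zero_le_one (dJ1T_nonneg _ _ _))
  · rw [one_div, ← pow_succ']
    exact mul_le_of_le_one_right (by positivity) (min_le_left _ _)

theorem dJ1T_lt_of_dJ1_lt {f g : ℝ → ℝ} {a : ℝ} (m : ℕ) (ha : a ≤ 1)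
    (h : dJ1 f g < (2 : ℝ)⁻¹ ^ (m + 1) * a) :
    dJ1T ((m : ℝ) + 1) (restrictD ((m : ℝ) + 1) f) (restrictD ((m : ℝ) + 1) g) < a := by
  have hterm := (dJ1_summable f g).le_tsum m fun k _ =>
    mul_nonneg (by positivity) (le_min zero_le_one (dJ1T_nonneg _ _ _))
  have := lt_of_mul_lt_mul_left (hterm.trans_lt h) (by positivity)
  exact (min_lt_iff.1 this).resolve_left ha.not_gt

theorem dJ1_le_of_forall_dJ1T_le {f g : ℝ → ℝ} {η : ℝ} {N : ℕ} (hη : 0 ≤ η)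
    (h : ∀ m < N, dJ1T ((m : ℝ) + 1) (restrictD ((m : ℝ) + 1) f) (restrictD ((m : ℝ) + 1) g) ≤ η) :
    dJ1 f g ≤ η + (2 : ℝ)⁻¹ ^ N := by
  rw [dJ1, ← (dJ1_summable f g).sum_add_tsum_nat_add N]
  gcongr
  · calc _ ≤ ∑ m ∈ Finset.range N, (2 : ℝ)⁻¹ ^ (m + 1) * η :=
          Finset.sum_le_sum fun m hm => by
            gcongr
            exact (min_le_right _ _).trans (h m (Finset.mem_range.1 hm))
      _ ≤ η := by
          rw [← Finset.sum_mul]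
          refine mul_le_of_le_one_left hη ?_
          have := sum_geometric_two_le N
          simp only [one_div, pow_succ, ← Finset.sum_mul] at this ⊢
          linarith
  · calc _ ≤ ∑' m : ℕ, (2 : ℝ)⁻¹ ^ N / 2 / 2 ^ m :=
          Summable.tsum_le_tsum (fun m => ?_) ((summable_nat_add_iff N).2 (dJ1_summable f g))
            (summable_geometric_two' _)
      _ = (2 : ℝ)⁻¹ ^ N := tsum_geometric_two' _
    calc _ ≤ (2 : ℝ)⁻¹ ^ (m + N + 1) := mul_le_of_le_one_right (by positivity) (min_le_left _ _)
      _ = (2 : ℝ)⁻¹ ^ N / 2 / 2 ^ m := by rw [pow_add, pow_add, inv_pow]; ring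

section tauGe

variable {c : ℝ} {g : ℝ → ℝ}

theorem tauGe_nonneg : 0 ≤ tauGe c g :=
  le_sInf fun _ ⟨_, ht, _, hx⟩ => hx ▸ EReal.coe_nonneg.2 ht.le

theorem tauGe_le {t : ℝ} (ht : 0 < t) (hgt : c ≤ g t) : tauGe c g ≤ t :=
  sInf_le ⟨t, ht, hgt, rfl⟩

theorem le_tauGe {b : EReal} (h : ∀ t : ℝ, 0 < t → c ≤ g t → b ≤ t) : b ≤ tauGe c g :=
  le_sInf fun _ ⟨t, ht, hgt, hx⟩ => hx ▸ h t ht hgt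

theorem lt_of_lt_tauGe {t : ℝ} (ht : 0 < t) (h : (t : EReal) < tauGe c g) : g t < c :=
  not_le.1 fun hgt => (tauGe_le ht hgt).not_gt h

theorem exists_tauGe_eq_coe {t : ℝ} (h : tauGe c g ≤ t) :
    ∃ r : ℝ, tauGe c g = r ∧ 0 ≤ r ∧ r ≤ t := by
  have hbot : tauGe c g ≠ ⊥ := ne_bot_of_le_ne_bot EReal.zero_ne_bot tauGe_nonneg
  have htop : tauGe c g ≠ ⊤ := ne_top_of_le_ne_top (EReal.coe_ne_top t) h
  refine ⟨(tauGe c g).toReal, (EReal.coe_toReal htop hbot).symm, ?_, ?_⟩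
  · exact EReal.toReal_nonneg tauGe_nonneg
  · exact EReal.toReal_le_toReal h hbot (EReal.coe_ne_top t) |>.trans_eq (EReal.toReal_coe t)

/-- Right-continuity makes the infimum defining `tauGe` attained. -/
theorem le_of_tauGe_eq (hg : IsCadlag g) {r : ℝ} (hr : tauGe c g = r) : c ≤ g r := by
  have hr0 : 0 ≤ r := EReal.coe_nonneg.1 (hr ▸ tauGe_nonneg)
  refine isClosed_Ici.mem_of_frequently_of_tendsto ?_ (hg.1 r hr0)
  refine frequently_iff.2 fun hU => ?_
  obtain ⟨u, hu, hsub⟩ := mem_nhdsGE_iff_exists_Ico_subset.1 hU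
  obtain ⟨_, ⟨t, ht, hgt, rfl⟩, htu⟩ := sInf_lt_iff.1 (hr ▸ EReal.coe_lt_coe_iff.2 hu :
    tauGe c g < u)
  have hrt : r ≤ t := EReal.coe_le_coe_iff.1 (hr ▸ tauGe_le ht hgt)
  exact ⟨t, hsub ⟨hrt, EReal.coe_lt_coe_iff.1 htu⟩, hgt⟩

theorem pos_of_tauGe_eq (hg : IsCadlag g) (h0 : g 0 < c) {s : ℝ} (hs : tauGe c g = s) : 0 < s := by
  obtain ⟨w, hw, hsub⟩ := mem_nhdsGE_iff_exists_Ico_subset.1 (hg.1 0 le_rfl (Iio_mem_nhds h0))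
  have hws : (w : EReal) ≤ s := hs ▸ le_tauGe fun t ht hgt =>
    EReal.coe_le_coe_iff.2 (not_lt.1 fun htw => (hsub ⟨ht.le, htw⟩ : g t < c).not_ge hgt)
  exact lt_of_lt_of_le hw (EReal.coe_le_coe_iff.1 hws)

end tauGe

section killRightD

variable {g : ℝ → ℝ} {t : ℝ}

theorem killRightD_of_lt (h : (t : EReal) < tauGe 1 g) : killRightD g t = g t := if_pos h

theorem killRightD_eq_ite {r : ℝ} (hr : tauGe 1 g = r) :
    killRightD g t = if t < r then g t else 1 := by
  simp only [killRightD, hr, EReal.coe_lt_coe_iff]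

theorem abs_killRightD_le {B : ℝ} (hB : 1 ≤ B) (h : |g t| ≤ B) : |killRightD g t| ≤ B := by
  unfold killRightD
  split_ifs
  exacts [h, by rwa [abs_one]]

end killRightD

theorem tauGe_le_of_comp_timeChange {f g γ : ℝ → ℝ} {M T s δ : ℝ} (hγ : IsTimeChange M γ)
    (hTM : T ≤ M) (hδ : 0 ≤ δ) (hδs : δ < s) (hsT : s + δ ≤ T)
    (htime : ∀ t ∈ Icc 0 T, |γ t - t| ≤ δ)
    (hval : ∀ t ∈ Icc 0 T, |f (γ t) - g t| ≤ δ) (hfs : 1 + δ ≤ f s) :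
    tauGe 1 g ≤ ((s + δ : ℝ) : EReal) := by
  obtain ⟨ts, hts, hγts⟩ : ∃ ts ∈ Icc 0 T, γ ts = s := by
    refine intermediate_value_Icc (by linarith) (hγ.1.mono (Icc_subset_Icc_right hTM)) ⟨?_, ?_⟩
    · rw [hγ.2.2.1]; linarith
    · linarith [(abs_le.1 (htime T ⟨by linarith, le_rfl⟩)).1]
  have htsδ := abs_le.1 (htime ts hts)
  have hgts := abs_le.1 (hval ts hts)
  rw [hγts] at htsδ hgts
  exact (tauGe_le (g := g) (t := ts) (by linarith) (by linarith)).trans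
    (EReal.coe_le_coe_iff.2 (by linarith))

theorem eventually_nhdsGT_zero_lt {a : ℝ} (ha : 0 < a) : ∀ᶠ δ in 𝓝[>] (0 : ℝ), δ < a :=
  eventually_nhdsWithin_of_eventually_nhds (eventually_lt_nhds ha)

/-- `sup_{0 ≤ t < τ - δ} f t < 1` for every `δ > 0`, where `τ = tauGe 1 f`. -/
def SupLtOneBeforeTau (f : ℝ → ℝ) : Prop :=
  ∀ δ : ℝ, 0 < δ → ∃ c : ℝ, c < 1 ∧ ∀ t : ℝ, 0 ≤ t → ((t + δ : ℝ) : EReal) < tauGe 1 f → f t ≤ c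

section SupLtOneBeforeTau

variable {f : ℝ → ℝ}

theorem SupLtOneBeforeTau.eventually_lt_tauGe (hsup : SupLtOneBeforeTau f) {T : ℝ}
    (hT : ((T + 1 / 2 : ℝ) : EReal) < tauGe 1 f) :
    ∀ᶠ δ in 𝓝[>] 0, ∀ (g γ : ℝ → ℝ) (M : ℝ), IsTimeChange M γ → T + 1 ≤ M →
      (∀ t ∈ Icc 0 (T + 1), |γ t - t| ≤ δ) → (∀ t ∈ Icc 0 (T + 1), |f (γ t) - g t| ≤ δ) →
      (T : EReal) < tauGe 1 g := by
  obtain ⟨c, hc, hfc⟩ := hsup (1 / 4) (by norm_num)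
  filter_upwards [eventually_nhdsGT_zero_lt (by norm_num : (0 : ℝ) < 1 / 8),
    eventually_nhdsGT_zero_lt (sub_pos.2 hc)] with δ hδ hδc
  intro g γ M hγ hM htime hval
  refine lt_of_lt_of_le (EReal.coe_lt_coe_iff.2 (by linarith : T < T + 1 / 8))
    (le_tauGe fun t ht hgt => ?_)
  by_contra! htT
  have htT := EReal.coe_lt_coe_iff.1 htT
  have ht' : t ∈ Icc 0 (T + 1) := ⟨ht.le, by linarith⟩
  have hγt := abs_le.1 (htime t ht')
  have hfγ : f (γ t) ≤ c := hfc _ (hγ.mem_Icc ⟨ht.le, ht'.2.trans hM⟩).1 <|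
    lt_of_le_of_lt (EReal.coe_le_coe_iff.2 (by linarith)) hT
  linarith [(abs_le.1 (hval t ht')).1]

theorem SupLtOneBeforeTau.eventually_abs_killRightD_sub_le_of_tauGe_eq
    (hsup : SupLtOneBeforeTau f) (hf : IsCadlag f) {s : ℝ}
    (hs : tauGe 1 f = s) (hs0 : 0 < s) (hfs : 1 < f s) {ε : ℝ} (hε : 0 < ε) :
    ∀ᶠ δ in 𝓝[>] 0, ∀ (g γ : ℝ → ℝ) (M T : ℝ), IsCadlag g → IsTimeChange M γ → T ≤ M →
      s + δ ≤ T → (∀ t ∈ Icc 0 T, |γ t - t| ≤ δ) → (∀ t ∈ Icc 0 T, |f (γ t) - g t| ≤ δ) →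
      ∀ t ∈ Icc 0 T, |killRightD f (γ t) - killRightD g t| ≤ ε := by
  obtain ⟨ρ, hsρ, hρ⟩ : ∃ ρ > s, Ico s ρ ⊆ f ⁻¹' Ioi ((1 + f s) / 2) :=
    mem_nhdsGE_iff_exists_Ico_subset.1 (hf.1 s hs0.le (Ioi_mem_nhds (by linarith)))
  obtain ⟨l, hl, hosc⟩ := hf.exists_Ioo_abs_sub_le hs0 (half_pos hε)
  obtain ⟨c, hc, hfc⟩ := hsup ((s - l) / 2) (by linarith [hl.2])
  filter_upwards [self_mem_nhdsWithin, eventually_nhdsGT_zero_lt (by linarith : 0 < (1 - c) / 2),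
    eventually_nhdsGT_zero_lt (by linarith : 0 < (f s - 1) / 2),
    eventually_nhdsGT_zero_lt (by linarith : 0 < (ρ - s) / 2),
    eventually_nhdsGT_zero_lt (by linarith [hl.2] : 0 < (s - l) / 2),
    eventually_nhdsGT_zero_lt (half_pos hε)] with δ (hδ : 0 < δ) hδc hδfs hδρ hδl hδε
  intro g γ M T hg hγ hTM hsT htime hval
  have hγT : ∀ t ∈ Icc 0 T, γ t ∈ Icc 0 M := fun t ht => hγ.mem_Icc ⟨ht.1, ht.2.trans hTM⟩
  obtain ⟨r, hr, hr0, hrsδ⟩ := exists_tauGe_eq_coe <|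
    tauGe_le_of_comp_timeChange hγ hTM hδ.le (by linarith [hl.1]) hsT htime hval (by linarith)
  have hrT : r ∈ Icc 0 T := ⟨hr0, by linarith⟩
  have hkilled : ∀ t ∈ Icc 0 T, s ≤ γ t → r ≤ t := by
    intro t ht hst
    have htδ := abs_le.1 (htime t ht)
    rcases lt_or_ge (γ t) ρ with hρt | hρt
    · have : (1 + f s) / 2 < f (γ t) := hρ ⟨hst, hρt⟩
      have hgt : 1 ≤ g t := by linarith [(abs_le.1 (hval t ht)).2]
      exact EReal.coe_le_coe_iff.1 (hr ▸ tauGe_le (by linarith [hl.1]) hgt)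
    · linarith
  have hlγr : l < γ r := by
    by_contra! h
    have : f (γ r) ≤ c := hfc _ (hγT r hrT).1 (hs ▸ EReal.coe_lt_coe_iff.2 (by linarith))
    linarith [(abs_le.1 (hval r hrT)).1, le_of_tauGe_eq hg hr]
  intro t ht
  rw [killRightD_eq_ite hs, killRightD_eq_ite hr]
  split_ifs with hγts' htr htr
  · linarith [hval t ht]
  · have hγrt : γ r ≤ γ t :=
      hγ.2.1.monotoneOn ⟨hr0, hrT.2.trans hTM⟩ ⟨ht.1, ht.2.trans hTM⟩ (not_lt.1 htr)
    have hft : f (γ t) < 1 := lt_of_lt_tauGe (hl.1.trans_lt (hlγr.trans_le hγrt))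
      (hs ▸ EReal.coe_lt_coe_iff.2 hγts')
    have hfγ := abs_le.1 (hosc (γ t) ⟨hlγr.trans_le hγrt, hγts'⟩ (γ r) ⟨hlγr, hγrt.trans_lt hγts'⟩)
    rw [abs_le]
    constructor <;> linarith [(abs_le.1 (hval r hrT)).1, le_of_tauGe_eq hg hr]
  · exact absurd (hkilled t ht (not_lt.1 hγts')) (not_le.2 htr)
  · simp [hε.le]

theorem SupLtOneBeforeTau.eventually_abs_killRightD_sub_le (hsup : SupLtOneBeforeTau f)
    (hf : IsCadlag f) (h0 : f 0 < 1) (hjump : ∀ s : ℝ, tauGe 1 f = (s : EReal) → 1 < f s)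
    (T : ℝ) {ε : ℝ} (hε : 0 < ε) :
    ∀ᶠ δ in 𝓝[>] 0, ∀ (g γ : ℝ → ℝ) (M : ℝ), IsCadlag g → IsTimeChange M γ → T + 1 ≤ M →
      (∀ t ∈ Icc 0 (T + 1), |γ t - t| ≤ δ) → (∀ t ∈ Icc 0 (T + 1), |f (γ t) - g t| ≤ δ) →
      ∀ t ∈ Icc 0 T, |killRightD f (γ t) - killRightD g t| ≤ ε := by
  rcases lt_or_ge ((T + 1 / 2 : ℝ) : EReal) (tauGe 1 f) with hτ | hτ
  · filter_upwards [hsup.eventually_lt_tauGe hτ, eventually_nhdsGT_zero_lt hε,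
      eventually_nhdsGT_zero_lt (by norm_num : (0 : ℝ) < 1 / 2)] with δ hτg hδε hδ
    intro g γ M _ hγ hM htime hval t ht
    have ht' : t ∈ Icc 0 (T + 1) := ⟨ht.1, by linarith [ht.2]⟩
    have hγt : (γ t : EReal) < tauGe 1 f := lt_of_le_of_lt
      (EReal.coe_le_coe_iff.2 (by linarith [(abs_le.1 (htime t ht')).2, ht.2])) hτ
    have htg : (t : EReal) < tauGe 1 g :=
      (EReal.coe_le_coe_iff.2 ht.2).trans_lt (hτg g γ M hγ hM htime hval)
    rw [killRightD_of_lt hγt, killRightD_of_lt htg]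
    exact (hval t ht').trans hδε.le
  · obtain ⟨s, hs, -, hsT⟩ := exists_tauGe_eq_coe hτ
    filter_upwards [hsup.eventually_abs_killRightD_sub_le_of_tauGe_eq hf hs
      (pos_of_tauGe_eq hf h0 hs) (hjump s hs) hε,
      eventually_nhdsGT_zero_lt (by norm_num : (0 : ℝ) < 1 / 2)] with δ hδ hδ'
    intro g γ M hg hγ hM htime hval t ht
    exact hδ g γ M (T + 1) hg hγ hM (by linarith) htime hval t ⟨ht.1, by linarith [ht.2]⟩

theorem SupLtOneBeforeTau.eventually_dJ1T_killRightD_lt (hsup : SupLtOneBeforeTau f)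
    (hf : IsCadlag f) (h0 : f 0 < 1) (hjump : ∀ s : ℝ, tauGe 1 f = (s : EReal) → 1 < f s)
    {T : ℝ} (hT : 0 < T) {ε : ℝ} (hε : 0 < ε) :
    ∀ᶠ δ in 𝓝[>] 0, ∀ g, IsCadlag g →
      dJ1T (T + 3) (restrictD (T + 3) f) (restrictD (T + 3) g) < δ →
      dJ1T T (restrictD T (killRightD f)) (restrictD T (killRightD g)) < ε := by
  obtain ⟨B, hB⟩ := hf.exists_abs_le (T + 3)
  have hBK : B + 1 ≤ |B| + 1 := by linarith [le_abs_self B]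
  have hK : 1 ≤ |B| + 1 := by linarith [abs_nonneg B]
  filter_upwards [hsup.eventually_abs_killRightD_sub_le hf h0 hjump T (half_pos hε),
    self_mem_nhdsWithin, eventually_nhdsGT_zero_lt one_pos, eventually_nhdsGT_zero_lt (half_pos hT),
    eventually_nhdsGT_zero_lt (by positivity : 0 < ε / (8 * (2 * (|B| + 1) + 1)))]
    with δ hkill (hδ : 0 < δ) hδ1 hδT hδε
  intro g hg hfg
  obtain ⟨γ, hγ, htime, hval⟩ :=
    exists_timeChange_of_dJ1T_lt (hf.exists_abs_restrictD_sub_le hg _) hfg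
  have htime' : ∀ t ∈ Icc 0 (T + 1), |γ t - t| ≤ δ :=
    fun t ht => htime t ⟨ht.1, by linarith [ht.2]⟩
  have hval' : ∀ t ∈ Icc 0 (T + 1), |f (γ t) - g t| ≤ δ := by
    intro t ht
    have := hval t ⟨ht.1, by linarith [ht.2]⟩
    rwa [restrictD_of_le _ (by linarith [(abs_le.1 (htime' t ht)).2, ht.2]),
      restrictD_of_le _ (by linarith [ht.2])] at this
  have hF : ∀ u ∈ Icc 0 T, |killRightD f u| ≤ |B| + 1 := fun u hu =>
    abs_killRightD_le hK ((hB u ⟨hu.1, by linarith [hu.2]⟩).trans (by linarith))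
  have hG : ∀ t ∈ Icc 0 T, |killRightD g t| ≤ |B| + 1 := by
    intro t ht
    have ht' : t ∈ Icc 0 (T + 1) := ⟨ht.1, by linarith [ht.2]⟩
    have hfγ := hB _ (hγ.mem_Icc ⟨ht.1, by linarith [ht.2]⟩)
    have hgf := (abs_sub_abs_le_abs_sub (g t) (f (γ t))).trans
      ((abs_sub_comm _ _).trans_le (hval' t ht'))
    exact abs_killRightD_le hK (by linarith)
  calc dJ1T T (restrictD T (killRightD f)) (restrictD T (killRightD g))
      ≤ ε / 2 + 3 * δ * (2 * (|B| + 1) + 1) :=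
        dJ1T_restrictD_le hγ (by linarith) hδ (by linarith)
          (fun t ht => htime t ⟨ht.1, by linarith [ht.2]⟩)
          (hkill g γ (T + 3) hg hγ (by linarith) htime' hval') hF hG
    _ < ε := by
        rw [lt_div_iff₀ (by positivity)] at hδε
        nlinarith

end SupLtOneBeforeTau

/-- Proposition 3.6 / `prop:SMkill1`. If `f ∈ D([0,∞),ℝ)` satisfies
`f(0) < 1`, `sup_{0 ≤ t < τ−δ} f(t) < 1` for every `δ > 0` (where
`τ = inf{t>0 : f(t) ≥ 1}`, `inf ∅ = ∞`), and `f(τ) > 1` whenever `τ < ∞`, then `f` is a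
point of continuity of `D^r` for the Skorokhod `J1` metric. -/
theorem killRightD_continuousAt (f : ℝ → ℝ) (hf : IsCadlag f) (h0 : f 0 < 1)
    (hsup : ∀ δ : ℝ, 0 < δ → ∃ c : ℝ, c < 1 ∧ ∀ t : ℝ, 0 ≤ t →
      ((t + δ : ℝ) : EReal) < tauGe 1 f → f t ≤ c)
    (hjump : ∀ s : ℝ, tauGe 1 f = (s : EReal) → 1 < f s) :
    ∀ ε : ℝ, 0 < ε → ∃ δ : ℝ, 0 < δ ∧ ∀ g : ℝ → ℝ, IsCadlag g →
      dJ1 f g < δ → dJ1 (killRightD f) (killRightD g) < ε := by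
  intro ε hε
  obtain ⟨N, hN⟩ := exists_pow_lt_of_lt_one (half_pos hε) (by norm_num : (2 : ℝ)⁻¹ < 1)
  have hlocal : ∀ m ∈ Finset.range N, ∀ᶠ δ in 𝓝[>] 0, ∀ g, IsCadlag g → dJ1 f g < δ →
      dJ1T ((m : ℝ) + 1) (restrictD ((m : ℝ) + 1) (killRightD f))
        (restrictD ((m : ℝ) + 1) (killRightD g)) ≤ ε / 4 := by
    intro m _
    have hwindow := SupLtOneBeforeTau.eventually_dJ1T_killRightD_lt hsup hf h0 hjump
      (T := (m : ℝ) + 1) (by positivity) (by positivity : 0 < ε / 4)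
    obtain ⟨η, hη, hη1, hη0 : 0 < η⟩ :=
      (hwindow.and ((eventually_nhdsGT_zero_lt one_pos).and self_mem_nhdsWithin)).exists
    filter_upwards [eventually_nhdsGT_zero_lt (by positivity : 0 < (2 : ℝ)⁻¹ ^ (m + 3 + 1) * η)]
      with δ hδ g hg hfg
    have := dJ1T_lt_of_dJ1_lt (m + 3) hη1.le (hfg.trans hδ)
    rw [show ((m + 3 : ℕ) : ℝ) + 1 = (m : ℝ) + 1 + 3 by push_cast; ring] at this
    exact (hη g hg this).le
  obtain ⟨δ, hδ, hδ0⟩ := (((eventually_all_finset _).2 hlocal).and self_mem_nhdsWithin).exists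
  refine ⟨δ, hδ0, fun g hg hfg => ?_⟩
  calc dJ1 (killRightD f) (killRightD g) ≤ ε / 4 + (2 : ℝ)⁻¹ ^ N :=
        dJ1_le_of_forall_dJ1T_le (by positivity) fun m hm => hδ m (Finset.mem_range.2 hm) g hg hfg
    _ < ε := by linarith
end
end

section
/- Assume (H0), fix h > 0, and let G_k = G_{k,h} be the Grünwald coefficients (with G_k = 0 for k < 0) and φ_h(β) = Σ_{k=0}^∞ G_k e^{h(1−k)β} as before. With y = y(β) the vector defined by y_n = e^{h(n−1)φ_h^{−1}(β)} for n ≤ 0 and y_n = (1/β) Σ_{k=n}^∞ G_{k+1} e^{h(n−1−k)φ_h^{−1}(β)} for n > 0, one has componentwise as β ↓ 0: (β/G_0)·y_n → z_n, where z_n = 0 for n ≤ 0 and z_n = −(1/G_0) Σ_{k=0}^n G_k for n > 0. In particular, 0 ≤ z_n ≤ 1 for n > 0. -/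
/-!
Expanding `e^{-(1-ξ)x}` in powers of `ξ` and integrating termwise identifies, by uniqueness of
power series coefficients, `G_j = ∫ K_j(y/h) μ(dy)` for an explicit kernel `K_j`
(`grunwaldKernel`). For `x ≥ 0`, `K_j(x) ≥ 0` unless `j = 1`, `Σ_j K_j(x) = 0` and
`Σ_j |K_j(x)| ≤ 2 min(x², x)`, so (H0) justifies the termwise integration and gives `Σ_j G_j = 0`,
`G_j ≥ 0` for `j ≥ 2` and `2 G_0 + G_1 ≥ 0`; these yield `0 ≤ z_n ≤ 1`.

Since `φ_h(θ) = e^{hθ} ψ((1 - e^{-hθ})/h) ≥ ψ((1 - e^{-hε})/h) > 0` for `θ ≥ ε`, the inverse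
`θ = φ_h^{-1}(β)` tends to `0` as `β ↓ 0`. For `n > 0`,
`(β/G_0) y_n = G_0^{-1} Σ_m G_{n+m+1} e^{-h(m+1)θ} → G_0^{-1} Σ_{k>n} G_k = z_n` by dominated
convergence, and for `n ≤ 0`, `(β/G_0) y_n = (β/G_0) e^{h(n-1)θ} → 0`.
-/

open MeasureTheory Set Filter Topology

noncomputable section

/-- Assumption (H0): `μ` is a nonnegative Borel measure on `(0,∞)` with
`∫ (y² ∧ y) μ(dy) < ∞` and `∫_{(0,1)} y μ(dy) = ∞`. -/
def H0 (μ : Measure ℝ) : Prop :=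
  μ (Iic 0) = 0 ∧
  (∫⁻ y, ENNReal.ofReal (min (y ^ 2) y) ∂μ) < ⊤ ∧
  (∫⁻ y in Ioo (0:ℝ) 1, ENNReal.ofReal y ∂μ) = ⊤

/-- The Laplace exponent `ψ(ξ) = ∫ (e^{−ξy} − 1 + ξy) μ(dy)`. -/
noncomputable def psiH (μ : Measure ℝ) (ξ : ℝ) : ℝ :=
  ∫ y, (Real.exp (-(ξ * y)) - 1 + ξ * y) ∂μ

/-- `φ_h(β) = e^{hβ} ψ((1−e^{−hβ})/h) = Σ_{k≥0} G_k e^{h(1−k)β}`. -/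
noncomputable def phiExp (G : ℤ → ℝ) (h β : ℝ) : ℝ :=
  ∑' k : ℕ, G (k : ℤ) * Real.exp (h * (1 - (k : ℝ)) * β)

/-- The candidate resolvent vector `y = y(β)` (with `θ = φ_h^{−1}(β)`):
`y_n = e^{h(n−1)θ}` for `n ≤ 0` and `y_n = (1/β) Σ_{k≥n} G_{k+1} e^{h(n−1−k)θ}` for
`n > 0`. -/
noncomputable def resVec (G : ℤ → ℝ) (h θ β : ℝ) : ℤ → ℝ :=
  fun n => if n ≤ 0 then Real.exp (h * ((n : ℝ) - 1) * θ)
    else (1 / β) * ∑' m : ℕ, G (n + (m : ℤ) + 1) * Real.exp (h * (-1 - (m : ℝ)) * θ)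

open Real

def grunwaldKernel (j : ℕ) (x : ℝ) : ℝ :=
  exp (-x) * x ^ j / j.factorial + if j = 0 then x - 1 else if j = 1 then -x else 0

section Kernel

variable {x : ℝ}

lemma grunwaldKernel_zero (x : ℝ) : grunwaldKernel 0 x = exp (-x) - 1 + x := by
  simp only [grunwaldKernel, pow_zero, mul_one, Nat.factorial_zero, Nat.cast_one, div_one,
    ↓reduceIte]
  ring

lemma grunwaldKernel_one (x : ℝ) : grunwaldKernel 1 x = x * exp (-x) - x := by
  simp only [grunwaldKernel, pow_one, Nat.factorial_one, Nat.cast_one, div_one, one_ne_zero,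
    ↓reduceIte]
  ring

lemma grunwaldKernel_of_two_le {j : ℕ} (hj : 2 ≤ j) (x : ℝ) :
    grunwaldKernel j x = exp (-x) * x ^ j / j.factorial := by
  simp [grunwaldKernel, show j ≠ 0 by omega, show j ≠ 1 by omega]

lemma continuous_grunwaldKernel (j : ℕ) : Continuous (grunwaldKernel j) := by
  unfold grunwaldKernel
  split_ifs <;> fun_prop

lemma hasSum_grunwaldKernel_mul_pow (x ξ : ℝ) :
    HasSum (fun j ↦ grunwaldKernel j x * ξ ^ j) (grunwaldKernel 0 ((1 - ξ) * x)) := by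
  have hexp : HasSum (fun j : ℕ ↦ exp (-x) * x ^ j / j.factorial * ξ ^ j)
      (exp (-x) * exp (ξ * x)) := by
    have hser := NormedSpace.expSeries_div_hasSum_exp (ξ * x)
    rw [← exp_eq_exp_ℝ] at hser
    refine (hser.mul_left (exp (-x))).congr_fun fun j ↦ ?_
    rw [mul_pow]; ring
  have hpoly : HasSum (fun j : ℕ ↦ (if j = 0 then x - 1 else if j = 1 then -x else 0) * ξ ^ j)
      (x - 1 + -x * ξ) := by
    refine ((hasSum_ite_eq 0 (x - 1)).add (hasSum_ite_eq 1 (-x * ξ))).congr_fun fun j ↦ ?_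
    rcases j with _ | _ | j <;> simp
  convert hexp.add hpoly using 1
  · ext j; rw [grunwaldKernel, add_mul]
  · rw [grunwaldKernel_zero, ← exp_add]; ring_nf

lemma hasSum_grunwaldKernel (x : ℝ) : HasSum (fun j ↦ grunwaldKernel j x) 0 := by
  simpa [grunwaldKernel_zero] using hasSum_grunwaldKernel_mul_pow x 1

lemma grunwaldKernel_zero_nonneg (x : ℝ) : 0 ≤ grunwaldKernel 0 x := by
  rw [grunwaldKernel_zero]; linarith [add_one_le_exp (-x)]

lemma grunwaldKernel_nonneg (hx : 0 ≤ x) {j : ℕ} (hj : j ≠ 1) : 0 ≤ grunwaldKernel j x := by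
  rcases Nat.lt_or_ge j 2 with hj2 | hj2
  · obtain rfl : j = 0 := by omega
    exact grunwaldKernel_zero_nonneg x
  · rw [grunwaldKernel_of_two_le hj2]; positivity

lemma sub_mul_exp_neg_nonneg (hx : 0 ≤ x) : 0 ≤ x - x * exp (-x) := by
  nlinarith [exp_le_one_iff.mpr (neg_nonpos.mpr hx)]

lemma sub_mul_exp_neg_le_min (hx : 0 ≤ x) : x - x * exp (-x) ≤ min (x ^ 2) x := by
  have h1 : 1 - x ≤ exp (-x) := by linarith [add_one_le_exp (-x)]
  exact le_min (by nlinarith) (by nlinarith [exp_pos (-x)])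

/-- All coefficients but `grunwaldKernel 1 x ≤ 0` are nonnegative, and the coefficients sum to
zero, so the absolute values sum to `-2 * grunwaldKernel 1 x`. -/
lemma hasSum_abs_grunwaldKernel (hx : 0 ≤ x) :
    HasSum (fun j ↦ |grunwaldKernel j x|) (2 * (x - x * exp (-x))) := by
  have hK1 : grunwaldKernel 1 x ≤ 0 := by
    rw [grunwaldKernel_one]; linarith [sub_mul_exp_neg_nonneg hx]
  have hval : 2 * (x - x * exp (-x)) = 0 - 2 * grunwaldKernel 1 x := by
    rw [grunwaldKernel_one]; ring
  rw [hval]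
  refine ((hasSum_grunwaldKernel x).sub
    ((hasSum_ite_eq 1 (grunwaldKernel 1 x)).mul_left 2)).congr_fun fun j ↦ ?_
  rcases eq_or_ne j 1 with rfl | hj
  · rw [if_pos rfl, abs_of_nonpos hK1]; ring
  · rw [if_neg hj, abs_of_nonneg (grunwaldKernel_nonneg hx hj)]; ring

lemma abs_grunwaldKernel_le (hx : 0 ≤ x) (j : ℕ) :
    |grunwaldKernel j x| ≤ 2 * min (x ^ 2) x :=
  (le_hasSum (hasSum_abs_grunwaldKernel hx) j fun _ _ ↦ abs_nonneg _).trans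
    (by linarith [sub_mul_exp_neg_le_min hx])

lemma monotoneOn_grunwaldKernel_zero : MonotoneOn (grunwaldKernel 0) (Ici 0) := by
  intro a ha b hb hab
  simp only [grunwaldKernel_zero]
  have h1 : exp (-a) ≤ 1 := exp_le_one_iff.mpr (neg_nonpos.mpr ha)
  have h2 : exp (-b) = exp (-a) * exp (a - b) := by rw [← exp_add]; ring_nf
  have h3 : exp (a - b) ≤ 1 := exp_le_one_iff.mpr (by linarith)
  nlinarith [add_one_le_exp (a - b), exp_pos (-a)]

/-- The left side is `e^{-x} g(x)` with `g(x) = (x - 2) e^x + x + 2`, and `g(0) = 0`,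
`g'(x) = (x - 1) e^x + 1 ≥ 0`. -/
lemma two_mul_grunwaldKernel_zero_add_one_nonneg (hx : 0 ≤ x) :
    0 ≤ 2 * grunwaldKernel 0 x + grunwaldKernel 1 x := by
  set g : ℝ → ℝ := fun t ↦ (t - 2) * exp t + t + 2
  have hg' : ∀ t, HasDerivAt g ((t - 1) * exp t + 1) t := fun t ↦
    (((((hasDerivAt_id' t).sub_const 2).mul (hasDerivAt_exp t)).add
      (hasDerivAt_id' t)).add_const 2).congr_deriv (by ring)
  have hmono : Monotone g := monotone_of_deriv_nonneg (fun t ↦ (hg' t).differentiableAt)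
    fun t ↦ by
      rw [(hg' t).deriv]
      have h1 : 1 - t ≤ exp (-t) := by linarith [add_one_le_exp (-t)]
      have h2 : exp (-t) * exp t = 1 := by rw [← exp_add]; simp
      nlinarith [exp_pos t]
  have hgx : 0 ≤ g x := by simpa [g] using hmono hx
  have : 2 * grunwaldKernel 0 x + grunwaldKernel 1 x = exp (-x) * g x := by
    have hinv : exp (-x) * exp x = 1 := by rw [← exp_add]; simp
    simp only [grunwaldKernel_zero, grunwaldKernel_one, g]
    linear_combination (2 - x) * hinv
  rw [this]; positivity

lemma min_sq_mul_le {c y : ℝ} (hy : 0 ≤ y) :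
    min ((c * y) ^ 2) (c * y) ≤ max (c ^ 2) c * min (y ^ 2) y := by
  rcases min_cases (y ^ 2) y with ⟨heq, _⟩ | ⟨heq, _⟩ <;> rw [heq]
  · exact (min_le_left _ _).trans_eq (mul_pow c y 2) |>.trans
      (mul_le_mul_of_nonneg_right (le_max_left _ _) (sq_nonneg y))
  · exact (min_le_right _ _).trans (mul_le_mul_of_nonneg_right (le_max_right _ _) hy)

end Kernel

open FormalMultilinearSeries in
lemma hasFPowerSeriesOnBall_ofScalars_of_hasSum {c : ℕ → ℝ} {f : ℝ → ℝ}
    (hc : ∀ ξ : ℝ, |ξ| < 1 → HasSum (fun n ↦ c n * ξ ^ n) (f ξ)) :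
    HasFPowerSeriesOnBall f (ofScalars ℝ c) 0 1 := by
  refine ⟨le_of_forall_lt_imp_le_of_dense fun r hr ↦ ?_, one_pos, fun {y} hy ↦ ?_⟩
  · lift r to NNReal using hr.ne_top
    apply le_radius_of_summable
    have hr1 : |(r : ℝ)| < 1 := by
      rw [NNReal.abs_eq]; exact_mod_cast hr
    simpa [norm_mul, mul_comm] using (hc r hr1).summable.norm
  · rw [← ENNReal.coe_one, Metric.eball_coe, NNReal.coe_one, mem_ball_zero_iff] at hy
    simpa [ofScalars_apply_eq, smul_eq_mul, mul_comm] using hc y hy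

lemma eq_of_hasSum_mul_pow {c d : ℕ → ℝ} {f : ℝ → ℝ}
    (hc : ∀ ξ : ℝ, |ξ| < 1 → HasSum (fun n ↦ c n * ξ ^ n) (f ξ))
    (hd : ∀ ξ : ℝ, |ξ| < 1 → HasSum (fun n ↦ d n * ξ ^ n) (f ξ)) : c = d :=
  FormalMultilinearSeries.ofScalars_series_injective ℝ ℝ <|
    (hasFPowerSeriesOnBall_ofScalars_of_hasSum hc).hasFPowerSeriesAt.eq_formalMultilinearSeries
      (hasFPowerSeriesOnBall_ofScalars_of_hasSum hd).hasFPowerSeriesAt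

lemma psiH_eq_integral_grunwaldKernel (μ : Measure ℝ) (s : ℝ) :
    psiH μ s = ∫ y, grunwaldKernel 0 (s * y) ∂μ := by
  simp only [psiH, grunwaldKernel_zero]

lemma psiH_nonneg (μ : Measure ℝ) (s : ℝ) : 0 ≤ psiH μ s := by
  rw [psiH_eq_integral_grunwaldKernel]
  exact integral_nonneg fun y ↦ grunwaldKernel_zero_nonneg _

def grunwaldCoeff (μ : Measure ℝ) (c : ℝ) (j : ℕ) : ℝ := ∫ y, grunwaldKernel j (c * y) ∂μ

lemma grunwaldCoeff_zero (μ : Measure ℝ) (c : ℝ) : grunwaldCoeff μ c 0 = psiH μ c :=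
  (psiH_eq_integral_grunwaldKernel μ c).symm

namespace H0

variable {μ : Measure ℝ} {c : ℝ}

lemma ae_pos (h0 : H0 μ) : ∀ᵐ y ∂μ, 0 < y := by
  simpa only [ae_iff, not_lt, Iic_def] using h0.1

lemma integrable_of_norm_le (h0 : H0 μ) {f : ℝ → ℝ} (hf : AEStronglyMeasurable f μ) (C : ℝ)
    (hb : ∀ y, 0 < y → ‖f y‖ ≤ C * min (y ^ 2) y) : Integrable f μ := by
  have hmin : Integrable (fun y : ℝ ↦ min (y ^ 2) y) μ := by
    refine ⟨by fun_prop, ?_⟩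
    refine (lintegral_congr_ae (h0.ae_pos.mono fun y hy ↦ ?_)).trans_lt h0.2.1
    exact Real.enorm_eq_ofReal (le_min (by positivity) hy.le)
  exact (hmin.const_mul C).mono' hf (h0.ae_pos.mono hb)

lemma integrable_grunwaldKernel (h0 : H0 μ) (hc : 0 ≤ c) (j : ℕ) :
    Integrable (fun y ↦ grunwaldKernel j (c * y)) μ :=
  h0.integrable_of_norm_le
    ((continuous_grunwaldKernel j).comp (continuous_const_mul c)).aestronglyMeasurable
    (2 * max (c ^ 2) c) fun y hy ↦ by
      rw [Real.norm_eq_abs, mul_assoc]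
      exact (abs_grunwaldKernel_le (by positivity) j).trans
        (mul_le_mul_of_nonneg_left (min_sq_mul_le hy.le) zero_le_two)

lemma psiH_mono (h0 : H0 μ) {s t : ℝ} (hs : 0 ≤ s) (hst : s ≤ t) : psiH μ s ≤ psiH μ t := by
  simp only [psiH_eq_integral_grunwaldKernel]
  refine integral_mono_ae (h0.integrable_grunwaldKernel hs 0)
    (h0.integrable_grunwaldKernel (hs.trans hst) 0) (h0.ae_pos.mono fun y hy ↦ ?_)
  exact monotoneOn_grunwaldKernel_zero (mem_Ici.2 (by positivity))
    (mem_Ici.2 (by nlinarith)) (mul_le_mul_of_nonneg_right hst hy.le)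

lemma psiH_pos (h0 : H0 μ) {s : ℝ} (hs : 0 < s) : 0 < psiH μ s := by
  rw [psiH_eq_integral_grunwaldKernel, integral_pos_iff_support_of_nonneg
    (fun y ↦ grunwaldKernel_zero_nonneg _) (h0.integrable_grunwaldKernel hs.le 0)]
  have hμ : μ (Ioo 0 1) ≠ 0 := fun h ↦ by
    simpa [Measure.restrict_eq_zero.2 h] using h0.2.2
  refine (pos_iff_ne_zero.2 hμ).trans_le (measure_mono fun y hy ↦ ?_)
  rw [Function.mem_support, grunwaldKernel_zero]
  have := add_one_lt_exp (neg_ne_zero.2 (mul_pos hs hy.1).ne')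
  linarith

lemma integrable_tsum_abs_grunwaldKernel (h0 : H0 μ) (hc : 0 ≤ c) :
    Integrable (fun y ↦ ∑' j, |grunwaldKernel j (c * y)|) μ := by
  refine (h0.integrable_of_norm_le (f := fun y ↦ 2 * (c * y - c * y * exp (-(c * y))))
    (by fun_prop) (2 * max (c ^ 2) c) fun y hy ↦ ?_).congr
    (h0.ae_pos.mono fun y hy ↦ (hasSum_abs_grunwaldKernel (by positivity)).tsum_eq.symm)
  have hx : 0 ≤ c * y := by positivity
  rw [Real.norm_eq_abs, abs_of_nonneg (by linarith [sub_mul_exp_neg_nonneg hx]),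
    mul_assoc 2 (max _ _)]
  exact mul_le_mul_of_nonneg_left ((sub_mul_exp_neg_le_min hx).trans (min_sq_mul_le hy.le))
    zero_le_two

lemma hasSum_grunwaldCoeff_mul_pow (h0 : H0 μ) (hc : 0 ≤ c) {ξ : ℝ} (hξ : |ξ| ≤ 1) :
    HasSum (fun j ↦ grunwaldCoeff μ c j * ξ ^ j) (psiH μ ((1 - ξ) * c)) := by
  have hlim := hasSum_integral_of_dominated_convergence
    (F := fun j y ↦ grunwaldKernel j (c * y) * ξ ^ j) (fun j y ↦ |grunwaldKernel j (c * y)|)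
    (fun j ↦ ((h0.integrable_grunwaldKernel hc j).mul_const _).aestronglyMeasurable)
    (fun j ↦ ae_of_all _ fun y ↦ by
      rw [norm_mul, norm_pow, Real.norm_eq_abs, Real.norm_eq_abs]
      exact mul_le_of_le_one_right (abs_nonneg _) (pow_le_one₀ (abs_nonneg _) hξ))
    (h0.ae_pos.mono fun y hy ↦ (hasSum_abs_grunwaldKernel (by positivity)).summable)
    (h0.integrable_tsum_abs_grunwaldKernel hc)
    (ae_of_all _ fun y ↦ hasSum_grunwaldKernel_mul_pow (c * y) ξ)
  simpa only [grunwaldCoeff, psiH_eq_integral_grunwaldKernel, integral_mul_const, mul_assoc]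
    using hlim

lemma hasSum_grunwaldCoeff (h0 : H0 μ) (hc : 0 ≤ c) : HasSum (grunwaldCoeff μ c) 0 := by
  simpa [psiH] using h0.hasSum_grunwaldCoeff_mul_pow hc (ξ := 1) (by simp)

lemma grunwaldCoeff_nonneg (h0 : H0 μ) (hc : 0 ≤ c) {j : ℕ} (hj : 2 ≤ j) :
    0 ≤ grunwaldCoeff μ c j :=
  integral_nonneg_of_ae <| h0.ae_pos.mono fun y hy ↦
    grunwaldKernel_nonneg (by positivity) (by omega)

lemma two_mul_grunwaldCoeff_zero_add_one_nonneg (h0 : H0 μ) (hc : 0 ≤ c) :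
    0 ≤ 2 * grunwaldCoeff μ c 0 + grunwaldCoeff μ c 1 := by
  rw [grunwaldCoeff, grunwaldCoeff, ← integral_const_mul, ← integral_add
    ((h0.integrable_grunwaldKernel hc 0).const_mul 2) (h0.integrable_grunwaldKernel hc 1)]
  exact integral_nonneg_of_ae <| h0.ae_pos.mono fun y hy ↦
    two_mul_grunwaldKernel_zero_add_one_nonneg (by positivity)

end H0

lemma grunwald_eq_grunwaldCoeff {μ : Measure ℝ} (h0 : H0 μ) {h : ℝ} (hh : 0 < h) {G : ℤ → ℝ}
    (hG : ∀ ξ : ℝ, |ξ| < 1 → HasSum (fun j : ℕ ↦ G j * ξ ^ j) (psiH μ ((1 - ξ) / h)))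
    (j : ℕ) : G j = grunwaldCoeff μ h⁻¹ j :=
  congr_fun (eq_of_hasSum_mul_pow hG fun ξ hξ ↦ by
    simpa only [div_eq_mul_inv] using
      h0.hasSum_grunwaldCoeff_mul_pow (inv_nonneg.2 hh.le) hξ.le) j

lemma phiExp_eq_exp_mul_psiH {μ : Measure ℝ} {h : ℝ} {G : ℤ → ℝ}
    (hG : ∀ ξ : ℝ, |ξ| < 1 → HasSum (fun j : ℕ ↦ G j * ξ ^ j) (psiH μ ((1 - ξ) / h)))
    {θ : ℝ} (hθ : 0 < h * θ) :
    phiExp G h θ = exp (h * θ) * psiH μ ((1 - exp (-(h * θ))) / h) := by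
  have hξ : |exp (-(h * θ))| < 1 := by
    rw [abs_of_pos (exp_pos _), exp_lt_one_iff]; linarith
  rw [phiExp, ← ((hG _ hξ).mul_left (exp (h * θ))).tsum_eq]
  refine tsum_congr fun j ↦ ?_
  rw [← exp_nat_mul, mul_left_comm, ← exp_add]
  ring_nf

lemma tendsto_nhdsGT_zero_of_phiExp_eq {μ : Measure ℝ} (h0 : H0 μ) {h : ℝ} (hh : 0 < h)
    {G : ℤ → ℝ}
    (hG : ∀ ξ : ℝ, |ξ| < 1 → HasSum (fun j : ℕ ↦ G j * ξ ^ j) (psiH μ ((1 - ξ) / h)))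
    {θ : ℝ → ℝ} (hθ : ∀ β : ℝ, 0 < β → 0 ≤ θ β ∧ phiExp G h (θ β) = β) :
    Tendsto θ (𝓝[>] 0) (𝓝 0) := by
  refine Metric.tendsto_nhds.2 fun ε hε ↦ ?_
  have hs : 0 < (1 - exp (-(h * ε))) / h :=
    div_pos (sub_pos.2 (exp_lt_one_iff.2 (by nlinarith))) hh
  filter_upwards [Ioo_mem_nhdsGT (h0.psiH_pos hs)] with β ⟨hβ, hβs⟩
  obtain ⟨hθ0, hφ⟩ := hθ β hβ
  rw [Real.dist_eq, sub_zero, abs_of_nonneg hθ0]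
  by_contra! hεθ
  have : psiH μ ((1 - exp (-(h * ε))) / h) ≤ β := calc
    _ ≤ psiH μ ((1 - exp (-(h * θ β))) / h) := h0.psiH_mono hs.le (by gcongr)
    _ ≤ exp (h * θ β) * psiH μ ((1 - exp (-(h * θ β))) / h) :=
      le_mul_of_one_le_left (psiH_nonneg _ _) (one_le_exp (by positivity))
    _ = β := by rw [← phiExp_eq_exp_mul_psiH hG (by nlinarith), hφ]
  linarith

lemma sum_range_nonpos_of_hasSum_zero {g : ℕ → ℝ} (hg : HasSum g 0) {k : ℕ}
    (hk : ∀ j, k ≤ j → 0 ≤ g j) : ∑ j ∈ Finset.range k, g j ≤ 0 := by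
  have htail := (hasSum_nat_add_iff' k).2 hg
  linarith [htail.nonneg fun j ↦ hk _ (Nat.le_add_left k j)]

lemma neg_sum_range_le {g : ℕ → ℝ} (hg : ∀ j, 2 ≤ j → 0 ≤ g j) (h2 : 0 ≤ 2 * g 0 + g 1)
    {N : ℕ} (hN : 2 ≤ N) : -∑ j ∈ Finset.range N, g j ≤ g 0 := by
  induction N, hN using Nat.le_induction with
  | base => simp only [Finset.sum_range_succ, Finset.sum_range_zero]; linarith
  | succ N hN ih => rw [Finset.sum_range_succ]; linarith [hg N hN]

lemma sum_Icc_zero_natCast (G : ℤ → ℝ) (N : ℕ) :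
    ∑ k ∈ Finset.Icc (0 : ℤ) N, G k = ∑ j ∈ Finset.range (N + 1), G j := by
  rw [Int.Icc_eq_finset_map, Finset.sum_map]
  simp

lemma tendsto_tsum_mul_exp {α : Type*} {l : Filter α} {g : ℕ → ℝ} (hg : Summable g) {h : ℝ}
    (hh : 0 ≤ h) {θ : α → ℝ} (hθ : Tendsto θ l (𝓝 0)) (hθ0 : ∀ᶠ a in l, 0 ≤ θ a) :
    Tendsto (fun a ↦ ∑' m : ℕ, g m * exp (h * (-1 - m) * θ a)) l (𝓝 (∑' m, g m)) := by
  refine tendsto_tsum_of_dominated_convergence hg.abs (fun m ↦ ?_) (hθ0.mono fun a ha m ↦ ?_)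
  · simpa using ((hθ.const_mul (h * (-1 - m))).rexp).const_mul (g m)
  · rw [norm_mul, Real.norm_eq_abs, Real.norm_of_nonneg (exp_pos _).le]
    refine mul_le_of_le_one_right (abs_nonneg _) (exp_le_one_iff.2 ?_)
    exact mul_nonpos_of_nonpos_of_nonneg
      (mul_nonpos_of_nonneg_of_nonpos hh (by linarith [m.cast_nonneg (α := ℝ)])) ha

lemma tendsto_resVec_of_nonpos {G : ℤ → ℝ} {h : ℝ} {θ : ℝ → ℝ} (hθ : Tendsto θ (𝓝[>] 0) (𝓝 0))
    {n : ℤ} (hn : n ≤ 0) :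
    Tendsto (fun β ↦ β / G 0 * resVec G h (θ β) β n) (𝓝[>] 0) (𝓝 0) := by
  simp only [resVec, if_pos hn]
  have hβ : Tendsto (fun β : ℝ ↦ β / G 0) (𝓝[>] 0) (𝓝 (0 / G 0)) :=
    tendsto_nhdsWithin_of_tendsto_nhds (continuous_id.div_const (G 0)).continuousAt
  simpa using hβ.mul (hθ.const_mul (h * (n - 1))).rexp

lemma tendsto_resVec_of_pos {G : ℤ → ℝ} (hG : HasSum (fun j : ℕ ↦ G j) 0) {h : ℝ} (hh : 0 ≤ h)
    {θ : ℝ → ℝ} (hθ : Tendsto θ (𝓝[>] 0) (𝓝 0)) (hθ0 : ∀ β, 0 < β → 0 ≤ θ β)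
    {n : ℤ} (hn : 0 < n) :
    Tendsto (fun β ↦ β / G 0 * resVec G h (θ β) β n) (𝓝[>] 0)
      (𝓝 (-(1 / G 0) * ∑ k ∈ Finset.Icc (0 : ℤ) n, G k)) := by
  lift n to ℕ using hn.le
  have htail : HasSum (fun m : ℕ ↦ G (n + m + 1)) (-∑ k ∈ Finset.Icc (0 : ℤ) n, G k) := by
    rw [sum_Icc_zero_natCast, ← zero_sub]
    refine ((hasSum_nat_add_iff' (n + 1)).2 hG).congr_fun fun m ↦ ?_
    congr 1; push_cast; ring
  have hlim := (tendsto_tsum_mul_exp htail.summable hh hθ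
    (eventually_nhdsWithin_of_forall hθ0)).const_mul (1 / G 0)
  rw [htail.tsum_eq, ← neg_mul_comm] at hlim
  refine hlim.congr' (eventually_nhdsWithin_of_forall fun β hβ ↦ ?_)
  simp only [resVec, if_neg (not_le.2 hn)]
  rw [← mul_assoc]
  congr 1
  field_simp [(mem_Ioi.1 hβ).ne']

lemma neg_one_div_mul_sum_Icc_nonneg_and_le_one {G : ℤ → ℝ} (hG : HasSum (fun j : ℕ ↦ G j) 0)
    (hG0 : 0 < G 0) (hG2 : ∀ j : ℕ, 2 ≤ j → 0 ≤ G j) (h01 : 0 ≤ 2 * G 0 + G 1) {n : ℤ}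
    (hn : 0 < n) :
    0 ≤ -(1 / G 0) * ∑ k ∈ Finset.Icc (0 : ℤ) n, G k ∧
      -(1 / G 0) * ∑ k ∈ Finset.Icc (0 : ℤ) n, G k ≤ 1 := by
  lift n to ℕ using hn.le
  have hn2 : 2 ≤ n + 1 := by omega
  rw [sum_Icc_zero_natCast, show ∀ S, -(1 / G 0) * S = -S / G 0 by intro S; ring]
  refine ⟨div_nonneg ?_ hG0.le, (div_le_one hG0).2 ?_⟩
  · linarith [sum_range_nonpos_of_hasSum_zero hG fun j hj ↦ hG2 j (hn2.trans hj)]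
  · exact neg_sum_range_le (g := fun j : ℕ ↦ G j) hG2 h01 hn2

theorem resolvent_vector_limit_general (μ : Measure ℝ) (h0 : H0 μ) (h : ℝ) (hh : 0 < h)
    (G : ℤ → ℝ)
    (hG : ∀ ξ : ℝ, |ξ| < 1 →
      HasSum (fun j : ℕ => G (j : ℤ) * ξ ^ j) (psiH μ ((1 - ξ) / h)))
    (θfun : ℝ → ℝ) (hθ : ∀ β : ℝ, 0 < β → 0 ≤ θfun β ∧ phiExp G h (θfun β) = β) :
    (∀ n : ℤ, Tendsto (fun β : ℝ => β / G 0 * resVec G h (θfun β) β n) (𝓝[>] 0)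
      (𝓝 (if n ≤ 0 then 0 else -(1 / G 0) * ∑ k ∈ Finset.Icc (0:ℤ) n, G k))) ∧
    (∀ n : ℤ, 0 < n →
      0 ≤ -(1 / G 0) * ∑ k ∈ Finset.Icc (0:ℤ) n, G k ∧
      -(1 / G 0) * ∑ k ∈ Finset.Icc (0:ℤ) n, G k ≤ 1) := by
  have hc : 0 ≤ h⁻¹ := inv_nonneg.2 hh.le
  have hGc := grunwald_eq_grunwaldCoeff h0 hh hG
  have hsum : HasSum (fun j : ℕ ↦ G j) 0 := by simpa only [hGc] using h0.hasSum_grunwaldCoeff hc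
  have hθlim := tendsto_nhdsGT_zero_of_phiExp_eq h0 hh hG hθ
  refine ⟨fun n ↦ ?_, fun n hn ↦
    neg_one_div_mul_sum_Icc_nonneg_and_le_one hsum ?_ (fun j hj ↦ ?_) ?_ hn⟩
  · split_ifs with hn
    · exact tendsto_resVec_of_nonpos hθlim hn
    · exact tendsto_resVec_of_pos hsum hh.le hθlim (fun β hβ ↦ (hθ β hβ).1) (not_le.1 hn)
  · have hG0 : G 0 = psiH μ h⁻¹ := by exact_mod_cast (hGc 0).trans (grunwaldCoeff_zero μ _)
    exact hG0 ▸ h0.psiH_pos (inv_pos.2 hh)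
  · exact hGc j ▸ h0.grunwaldCoeff_nonneg hc hj
  · exact_mod_cast (hGc 0).symm ▸ (hGc 1).symm ▸
      h0.two_mul_grunwaldCoeff_zero_add_one_nonneg hc

/-- Corollary 3.24 / `cor:lambdaRlambda*`. Under (H0) and for `h > 0`,
with the Grünwald coefficients `G_k = G_{k,h}` (`G_k = 0` for `k < 0`) and
`θfun β = φ_h^{−1}(β)`, one has componentwise as `β ↓ 0`:
`(β/G_0) y_n(β) → z_n`, where `z_n = 0` for `n ≤ 0` and
`z_n = −(1/G_0) Σ_{k=0}^n G_k` for `n > 0`; moreover `0 ≤ z_n ≤ 1` for `n > 0`. -/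
theorem resolvent_vector_limit (μ : Measure ℝ) (h0 : H0 μ) (h : ℝ) (hh : 0 < h)
    (G : ℤ → ℝ) (hGneg : ∀ k : ℤ, k < 0 → G k = 0)
    (hG : ∀ ξ : ℝ, |ξ| < 1 →
      HasSum (fun j : ℕ => G (j : ℤ) * ξ ^ j) (psiH μ ((1 - ξ) / h)))
    (θfun : ℝ → ℝ) (hθ : ∀ β : ℝ, 0 < β → 0 ≤ θfun β ∧ phiExp G h (θfun β) = β) :
    (∀ n : ℤ, Tendsto (fun β : ℝ => β / G 0 * resVec G h (θfun β) β n) (𝓝[>] 0)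
      (𝓝 (if n ≤ 0 then 0 else -(1 / G 0) * ∑ k ∈ Finset.Icc (0:ℤ) n, G k))) ∧
    (∀ n : ℤ, 0 < n →
      0 ≤ -(1 / G 0) * ∑ k ∈ Finset.Icc (0:ℤ) n, G k ∧
      -(1 / G 0) * ∑ k ∈ Finset.Icc (0:ℤ) n, G k ≤ 1) :=
  resolvent_vector_limit_general μ h0 h hh G hG θfun hθ
end
end
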